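/- arXiv:1409.3788 — 8 statements merged into one kernel-verified Lean document; each statement's English description precedes it below -/
import Mathlib

section
/- For every integer N ≥ 2 and every ω ∈ ℝ, the matrix Θ^{(N)}(ω) is Hermitian, satisfies the Dieudonné (quasi-Hermiticity) relation (H^{(N)}(ω))^† · Θ^{(N)}(ω) = Θ^{(N)}(ω) · H^{(N)}(ω), and satisfies Θ^{(N)}(0) = I (the N×N identity matrix). -/
open Matrix

/-- The N×N non-Hermitian discrete square-well Hamiltonian `H^{(N)}(ω)`:
`H_{11} = -1-iω`, `H_{NN} = -1+iω`, zeros elsewhere on the diagonal,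
`-1` on the sub- and superdiagonal, `0` otherwise (0-based indices here). -/
noncomputable def Hmat (N : ℕ) (ω : ℝ) : Matrix (Fin N) (Fin N) ℂ :=
  Matrix.of fun j k =>
    if (j : ℕ) = (k : ℕ) then
      (if (j : ℕ) = 0 then -1 - Complex.I * ω
       else if (j : ℕ) = N - 1 then -1 + Complex.I * ω else 0)
    else if (j : ℕ) + 1 = (k : ℕ) ∨ (k : ℕ) + 1 = (j : ℕ) then -1 else 0

/-- The metric `Θ^{(N)}(ω)`: ones on the diagonal,
`Θ_{n,n+k} = -iω (1-iω)^{k-1}` above and `Θ_{n+k,n} = iω (1+iω)^{k-1}` below. -/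
noncomputable def Theta (N : ℕ) (ω : ℝ) : Matrix (Fin N) (Fin N) ℂ :=
  Matrix.of fun j k =>
    if (j : ℕ) = (k : ℕ) then 1
    else if (j : ℕ) < (k : ℕ) then
      -Complex.I * ω * (1 - Complex.I * ω) ^ ((k : ℕ) - (j : ℕ) - 1)
    else Complex.I * ω * (1 + Complex.I * ω) ^ ((j : ℕ) - (k : ℕ) - 1)

noncomputable def tz (ω : ℝ) (m : ℤ) : ℂ :=
  if 0 < m then -Complex.I * ω * (1 - Complex.I * ω) ^ (m - 1).toNat
  else if m < 0 then Complex.I * ω * (1 + Complex.I * ω) ^ (-m - 1).toNat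
  else 1

noncomputable def dd (N : ℕ) (ω : ℝ) (n : ℕ) : ℂ :=
  if n = 0 then -1 - Complex.I * ω
  else if n = N - 1 then -1 + Complex.I * ω else 0

lemma Theta_apply (N : ℕ) (ω : ℝ) (j k : Fin N) :
    Theta N ω j k = tz ω (((k : ℕ) : ℤ) - ((j : ℕ) : ℤ)) := by
  unfold Theta tz
  rcases lt_trichotomy ((j : ℕ)) ((k : ℕ)) with h | h | h
  · rw [Matrix.of_apply, if_neg (by omega), if_pos h, if_pos (by omega)]
    congr 2
    omega
  · rw [Matrix.of_apply, if_pos h, if_neg (by omega), if_neg (by omega)]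
  · rw [Matrix.of_apply, if_neg (by omega), if_neg (by omega), if_neg (by omega),
      if_pos (by omega)]
    congr 2
    omega

lemma Hmat_apply (N : ℕ) (ω : ℝ) (j k : Fin N) :
    Hmat N ω j k = if (j : ℕ) = (k : ℕ) then dd N ω j
      else if (j : ℕ) + 1 = (k : ℕ) ∨ (k : ℕ) + 1 = (j : ℕ) then -1 else 0 := rfl

lemma tz_zero (ω : ℝ) : tz ω 0 = 1 := rfl

lemma tz_one (ω : ℝ) : tz ω 1 = -Complex.I * ω := by
  simp [tz]

lemma tz_neg_one (ω : ℝ) : tz ω (-1) = Complex.I * ω := by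
  simp [tz]

lemma tz_succ (ω : ℝ) (m : ℤ) (h : 1 ≤ m) :
    tz ω (m + 1) = (1 - Complex.I * ω) * tz ω m := by
  unfold tz
  rw [if_pos (by omega), if_pos (by omega),
    show (m + 1 - 1).toNat = (m - 1).toNat + 1 by omega, pow_succ]
  ring

lemma tz_pred (ω : ℝ) (m : ℤ) (h : m ≤ -1) :
    tz ω (m - 1) = (1 + Complex.I * ω) * tz ω m := by
  unfold tz
  rw [if_neg (show ¬(0 < m - 1) by omega), if_pos (show m - 1 < 0 by omega),
    if_neg (show ¬(0 < m) by omega), if_pos (show m < 0 by omega),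
    show (-(m - 1) - 1).toNat = (-m - 1).toNat + 1 by omega, pow_succ]
  ring

lemma tz_conj (ω : ℝ) (m : ℤ) : star (tz ω m) = tz ω (-m) := by
  unfold tz
  rcases lt_trichotomy m 0 with h | h | h
  · rw [if_neg (show ¬(0 < m) by omega), if_pos h, if_pos (show (0:ℤ) < -m by omega)]
    simp only [star_mul', star_pow, star_add, star_one, Complex.star_def,
      Complex.conj_I, Complex.conj_ofReal]
    ring_nf
  · subst h; simp
  · rw [if_pos h, if_neg (show ¬(0 < -m) by omega), if_pos (show -m < 0 by omega),
      show -(-m) - 1 = m - 1 from by ring]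
    simp only [star_mul', star_pow, star_sub, star_one, star_neg, Complex.star_def,
      Complex.conj_I, Complex.conj_ofReal, neg_neg]
    ring_nf
lemma sum3 {N j : ℕ} (hj : j < N) (F : ℕ → ℂ)
    (h0 : ∀ l, l < N → l ≠ j → l + 1 ≠ j → l ≠ j + 1 → F l = 0) :
    ∑ l ∈ Finset.range N, F l =
      (if 1 ≤ j then F (j - 1) else 0) + F j + (if j + 1 < N then F (j + 1) else 0) := by
  classical
  have hsub : ∑ l ∈ Finset.range N, F l
      = ∑ l ∈ (Finset.range N).filter (fun l => l + 1 = j ∨ l = j ∨ l = j + 1), F l := by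
    refine (Finset.sum_filter_of_ne ?_).symm
    intro x hx hFx
    by_contra hc
    push_neg at hc
    exact hFx (h0 x (Finset.mem_range.mp hx) hc.2.1 hc.1 hc.2.2)
  rw [hsub]
  by_cases h1 : 1 ≤ j
  · by_cases h2 : j + 1 < N
    · have he : (Finset.range N).filter (fun l => l + 1 = j ∨ l = j ∨ l = j + 1)
          = {j - 1, j, j + 1} := by
        ext l
        simp only [Finset.mem_filter, Finset.mem_range, Finset.mem_insert,
          Finset.mem_singleton]
        omega
      rw [he, Finset.sum_insert (by simp only [Finset.mem_insert, Finset.mem_singleton]; omega), Finset.sum_insert (by simp only [Finset.mem_insert, Finset.mem_singleton]; omega),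
        Finset.sum_singleton, if_pos h1, if_pos h2]
      ring
    · have he : (Finset.range N).filter (fun l => l + 1 = j ∨ l = j ∨ l = j + 1)
          = {j - 1, j} := by
        ext l
        simp only [Finset.mem_filter, Finset.mem_range, Finset.mem_insert,
          Finset.mem_singleton]
        omega
      rw [he, Finset.sum_insert (by simp only [Finset.mem_insert, Finset.mem_singleton]; omega), Finset.sum_singleton,
        if_pos h1, if_neg h2]
      ring
  · by_cases h2 : j + 1 < N
    · have he : (Finset.range N).filter (fun l => l + 1 = j ∨ l = j ∨ l = j + 1)
          = {j, j + 1} := by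
        ext l
        simp only [Finset.mem_filter, Finset.mem_range, Finset.mem_insert,
          Finset.mem_singleton]
        omega
      rw [he, Finset.sum_insert (by simp only [Finset.mem_singleton]; omega), Finset.sum_singleton, if_neg h1, if_pos h2]
      ring
    · have he : (Finset.range N).filter (fun l => l + 1 = j ∨ l = j ∨ l = j + 1)
          = {j} := by
        ext l
        simp only [Finset.mem_filter, Finset.mem_range, Finset.mem_singleton]
        omega
      rw [he, Finset.sum_singleton, if_neg h1, if_neg h2]
      ring

lemma HconjTheta (N : ℕ) (ω : ℝ) (j k : Fin N) :
    ((Hmat N ω)ᴴ * Theta N ω) j k =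
      (if 1 ≤ (j : ℕ) then -tz ω (((k : ℕ) : ℤ) - ((j : ℕ) : ℤ) + 1) else 0)
      + star (dd N ω (j : ℕ)) * tz ω (((k : ℕ) : ℤ) - ((j : ℕ) : ℤ))
      + (if (j : ℕ) + 1 < N then -tz ω (((k : ℕ) : ℤ) - ((j : ℕ) : ℤ) - 1) else 0) := by
  have hrw : ((Hmat N ω)ᴴ * Theta N ω) j k
      = ∑ l ∈ Finset.range N,
        (fun l' : ℕ => star (if l' = (j : ℕ) then dd N ω l'
            else if l' + 1 = (j : ℕ) ∨ (j : ℕ) + 1 = l' then (-1 : ℂ) else 0)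
          * tz ω (((k : ℕ) : ℤ) - (l' : ℤ))) l := by
    rw [Matrix.mul_apply, ← Fin.sum_univ_eq_sum_range]
    refine Finset.sum_congr rfl fun l _ => ?_
    rw [Matrix.conjTranspose_apply, Theta_apply, Hmat_apply]
  have hvan : ∀ l, l < N → l ≠ (j : ℕ) → l + 1 ≠ (j : ℕ) → l ≠ (j : ℕ) + 1 →
      (fun l' : ℕ => star (if l' = (j : ℕ) then dd N ω l'
            else if l' + 1 = (j : ℕ) ∨ (j : ℕ) + 1 = l' then (-1 : ℂ) else 0)
          * tz ω (((k : ℕ) : ℤ) - (l' : ℤ))) l = 0 := by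
    intro l hl h1 h2 h3
    simp only
    rw [if_neg h1, if_neg (by omega)]
    simp
  rw [hrw, sum3 j.isLt _ hvan]
  simp only
  congr 1
  · congr 1
    · by_cases h1 : 1 ≤ (j : ℕ)
      · rw [if_pos h1, if_pos h1, if_neg (show ¬((j : ℕ) - 1 = (j : ℕ)) by omega),
          if_pos (show (j : ℕ) - 1 + 1 = (j : ℕ) ∨ (j : ℕ) + 1 = (j : ℕ) - 1 by omega)]
        rw [show (((j : ℕ) - 1 : ℕ) : ℤ) = ((j : ℕ) : ℤ) - 1 by omega]
        rw [show ((k : ℕ) : ℤ) - (((j : ℕ) : ℤ) - 1) = ((k : ℕ) : ℤ) - ((j : ℕ) : ℤ) + 1 by ring]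
        simp
      · rw [if_neg h1, if_neg h1]
  · by_cases h2 : (j : ℕ) + 1 < N
    · rw [if_pos h2, if_pos h2, if_neg (show ¬((j : ℕ) + 1 = (j : ℕ)) by omega),
        if_pos (Or.inr trivial)]
      rw [show (((j : ℕ) + 1 : ℕ) : ℤ) = ((j : ℕ) : ℤ) + 1 by omega]
      rw [show ((k : ℕ) : ℤ) - (((j : ℕ) : ℤ) + 1) = ((k : ℕ) : ℤ) - ((j : ℕ) : ℤ) - 1 by ring]
      simp
    · rw [if_neg h2, if_neg h2]

lemma ThetaH (N : ℕ) (ω : ℝ) (j k : Fin N) :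
    (Theta N ω * Hmat N ω) j k =
      (if 1 ≤ (k : ℕ) then -tz ω (((k : ℕ) : ℤ) - ((j : ℕ) : ℤ) - 1) else 0)
      + dd N ω (k : ℕ) * tz ω (((k : ℕ) : ℤ) - ((j : ℕ) : ℤ))
      + (if (k : ℕ) + 1 < N then -tz ω (((k : ℕ) : ℤ) - ((j : ℕ) : ℤ) + 1) else 0) := by
  have hrw : (Theta N ω * Hmat N ω) j k
      = ∑ l ∈ Finset.range N,
        (fun l' : ℕ => tz ω ((l' : ℤ) - ((j : ℕ) : ℤ))
          * (if l' = (k : ℕ) then dd N ω l'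
            else if l' + 1 = (k : ℕ) ∨ (k : ℕ) + 1 = l' then (-1 : ℂ) else 0)) l := by
    rw [Matrix.mul_apply, ← Fin.sum_univ_eq_sum_range]
    refine Finset.sum_congr rfl fun l _ => ?_
    rw [Theta_apply, Hmat_apply]
  have hvan : ∀ l, l < N → l ≠ (k : ℕ) → l + 1 ≠ (k : ℕ) → l ≠ (k : ℕ) + 1 →
      (fun l' : ℕ => tz ω ((l' : ℤ) - ((j : ℕ) : ℤ))
          * (if l' = (k : ℕ) then dd N ω l'
            else if l' + 1 = (k : ℕ) ∨ (k : ℕ) + 1 = l' then (-1 : ℂ) else 0)) l = 0 := by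
    intro l hl h1 h2 h3
    simp only
    rw [if_neg h1, if_neg (by omega)]
    simp
  rw [hrw, sum3 k.isLt _ hvan]
  simp only
  congr 1
  · congr 1
    · by_cases h1 : 1 ≤ (k : ℕ)
      · rw [if_pos h1, if_pos h1, if_neg (show ¬((k : ℕ) - 1 = (k : ℕ)) by omega),
          if_pos (show (k : ℕ) - 1 + 1 = (k : ℕ) ∨ (k : ℕ) + 1 = (k : ℕ) - 1 by omega)]
        rw [show (((k : ℕ) - 1 : ℕ) : ℤ) = ((k : ℕ) : ℤ) - 1 by omega]
        ring
      · rw [if_neg h1, if_neg h1]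
    · rw [if_pos trivial]
      ring
  · by_cases h2 : (k : ℕ) + 1 < N
    · rw [if_pos h2, if_pos h2, if_neg (show ¬((k : ℕ) + 1 = (k : ℕ)) by omega),
        if_pos (Or.inr trivial)]
      rw [show (((k : ℕ) + 1 : ℕ) : ℤ) = ((k : ℕ) : ℤ) + 1 by omega]
      ring
    · rw [if_neg h2, if_neg h2]

lemma star_dd (N : ℕ) (ω : ℝ) (n : ℕ) :
    star (dd N ω n) = if n = 0 then -1 + Complex.I * ω
      else if n = N - 1 then -1 - Complex.I * ω else 0 := by
  unfold dd
  split_ifs <;>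
    simp [Complex.star_def, map_sub, map_add, map_neg, _root_.map_one, _root_.map_mul,
      Complex.conj_I, Complex.conj_ofReal] <;> ring

/-- For every `N ≥ 2` and `ω ∈ ℝ`, the matrix `Θ^{(N)}(ω)` is Hermitian, satisfies the
Dieudonné relation `H^† Θ = Θ H`, and satisfies `Θ^{(N)}(0) = I`. -/
theorem stmt0 (N : ℕ) (hN : 2 ≤ N) (ω : ℝ) :
    (Theta N ω).IsHermitian ∧
    (Hmat N ω)ᴴ * Theta N ω = Theta N ω * Hmat N ω ∧
    Theta N 0 = 1 := by
  refine ⟨?_, ?_, ?_⟩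
  · show (Theta N ω)ᴴ = Theta N ω
    ext i j
    rw [Matrix.conjTranspose_apply, Theta_apply, Theta_apply, tz_conj]
    congr 1
    ring
  · ext j k
    have hj' := j.isLt
    have hk' := k.isLt
    rw [HconjTheta, ThetaH, star_dd]
    unfold dd
    by_cases hj0 : (j : ℕ) = 0
    · rw [if_neg (show ¬(1 ≤ (j : ℕ)) from by omega),
        if_pos (show (j : ℕ) + 1 < N from by omega), if_pos hj0]
      by_cases hk0 : (k : ℕ) = 0
      · rw [if_neg (show ¬(1 ≤ (k : ℕ)) from by omega),
          if_pos (show (k : ℕ) + 1 < N from by omega), if_pos hk0,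
          show (((k : ℕ) : ℤ) - ((j : ℕ) : ℤ)) = 0 from by omega]
        norm_num [tz_zero, tz_one, tz_neg_one]
        try ring
      · by_cases hkN : (k : ℕ) = N - 1
        · rw [if_pos (show 1 ≤ (k : ℕ) from by omega),
            if_neg (show ¬((k : ℕ) + 1 < N) from by omega), if_neg hk0, if_pos hkN]
          ring
        · rw [if_pos (show 1 ≤ (k : ℕ) from by omega),
            if_pos (show (k : ℕ) + 1 < N from by omega), if_neg hk0, if_neg hkN,
            tz_succ ω (((k : ℕ) : ℤ) - ((j : ℕ) : ℤ)) (by omega)]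
          ring
    · by_cases hjN : (j : ℕ) = N - 1
      · rw [if_pos (show 1 ≤ (j : ℕ) from by omega),
          if_neg (show ¬((j : ℕ) + 1 < N) from by omega), if_neg hj0, if_pos hjN]
        by_cases hk0 : (k : ℕ) = 0
        · rw [if_neg (show ¬(1 ≤ (k : ℕ)) from by omega),
            if_pos (show (k : ℕ) + 1 < N from by omega), if_pos hk0]
          ring
        · by_cases hkN : (k : ℕ) = N - 1
          · rw [if_pos (show 1 ≤ (k : ℕ) from by omega),
              if_neg (show ¬((k : ℕ) + 1 < N) from by omega), if_neg hk0, if_pos hkN,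
              show (((k : ℕ) : ℤ) - ((j : ℕ) : ℤ)) = 0 from by omega]
            norm_num [tz_zero, tz_one, tz_neg_one]
            try ring
          · rw [if_pos (show 1 ≤ (k : ℕ) from by omega),
              if_pos (show (k : ℕ) + 1 < N from by omega), if_neg hk0, if_neg hkN,
              tz_pred ω (((k : ℕ) : ℤ) - ((j : ℕ) : ℤ)) (by omega)]
            ring
      · rw [if_pos (show 1 ≤ (j : ℕ) from by omega),
          if_pos (show (j : ℕ) + 1 < N from by omega), if_neg hj0, if_neg hjN]
        by_cases hk0 : (k : ℕ) = 0
        · rw [if_neg (show ¬(1 ≤ (k : ℕ)) from by omega),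
            if_pos (show (k : ℕ) + 1 < N from by omega), if_pos hk0,
            tz_pred ω (((k : ℕ) : ℤ) - ((j : ℕ) : ℤ)) (by omega)]
          ring
        · by_cases hkN : (k : ℕ) = N - 1
          · rw [if_pos (show 1 ≤ (k : ℕ) from by omega),
              if_neg (show ¬((k : ℕ) + 1 < N) from by omega), if_neg hk0, if_pos hkN,
              tz_succ ω (((k : ℕ) : ℤ) - ((j : ℕ) : ℤ)) (by omega)]
            ring
          · rw [if_pos (show 1 ≤ (k : ℕ) from by omega),
              if_pos (show (k : ℕ) + 1 < N from by omega), if_neg hk0, if_neg hkN]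
            ring
  · ext j k
    by_cases h : (j : ℕ) = (k : ℕ)
    · have : j = k := Fin.ext h
      subst this
      simp [Theta, Matrix.one_apply]
    · have : j ≠ k := fun hc => h (by rw [hc])
      simp [Theta, Matrix.one_apply, h, this]
end

section
/- For every integer N ≥ 2 and every ω ∈ ℝ, the matrix Θ₁^{(N)}(ω) is Hermitian and satisfies (H^{(N)}(ω))^† · Θ₁^{(N)}(ω) = Θ₁^{(N)}(ω) · H^{(N)}(ω); consequently, for every u ∈ ℝ the matrix Θ^{(N)}(ω) + u·Θ₁^{(N)}(ω) is Hermitian and satisfies (H^{(N)}(ω))^† · (Θ^{(N)}(ω) + u·Θ₁^{(N)}(ω)) = (Θ^{(N)}(ω) + u·Θ₁^{(N)}(ω)) · H^{(N)}(ω). -/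
open Matrix

/-- The matrix `Θ₁^{(N)}(ω)`: zero diagonal,
`(Θ₁)_{n,n+k} = (1-iω)^{k-1}` above and `(Θ₁)_{n+k,n} = (1+iω)^{k-1}` below. -/
noncomputable def Theta1 (N : ℕ) (ω : ℝ) : Matrix (Fin N) (Fin N) ℂ :=
  Matrix.of fun j k =>
    if (j : ℕ) = (k : ℕ) then 0
    else if (j : ℕ) < (k : ℕ) then (1 - Complex.I * ω) ^ ((k : ℕ) - (j : ℕ) - 1)
    else (1 + Complex.I * ω) ^ ((j : ℕ) - (k : ℕ) - 1)


section Aux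

def Gf (z w δ α β : ℂ) (a b : ℕ) : ℂ :=
  if a = b then δ else if a < b then α * z ^ (b - a - 1) else β * w ^ (a - b - 1)

noncomputable def GMat (N : ℕ) (z w δ α β : ℂ) : Matrix (Fin N) (Fin N) ℂ :=
  Matrix.of fun j k => Gf z w δ α β (j : ℕ) (k : ℕ)


lemma sum_three (N a : ℕ) (ha : a < N) (F : ℕ → ℂ)
    (h : ∀ l, l < N → l + 1 ≠ a → l ≠ a → l ≠ a + 1 → F l = 0) :
    ∑ l ∈ Finset.range N, F l
      = (if 1 ≤ a then F (a - 1) else 0) + F a + (if a + 1 < N then F (a + 1) else 0) := by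
  classical
  have key : ∀ c : ℕ, ∑ l ∈ Finset.range N, (if l = c then F l else 0)
      = if c < N then F c else 0 := by
    intro c
    rw [Finset.sum_ite_eq' (Finset.range N) c F]
    simp [Finset.mem_range]
  have step : ∀ l ∈ Finset.range N,
      F l = (if l + 1 = a then F l else 0) + (if l = a then F l else 0)
        + (if l = a + 1 then F l else 0) := by
    intro l hl
    simp only [Finset.mem_range] at hl
    by_cases h1 : l + 1 = a
    · rw [if_pos h1, if_neg (by omega), if_neg (by omega)]; ring
    · by_cases h2 : l = a
      · rw [if_neg h1, if_pos h2, if_neg (by omega)]; ring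
      · by_cases h3 : l = a + 1
        · rw [if_neg h1, if_neg h2, if_pos h3]; ring
        · rw [if_neg h1, if_neg h2, if_neg h3, h l hl h1 h2 h3]; ring
  rw [Finset.sum_congr rfl step, Finset.sum_add_distrib, Finset.sum_add_distrib]
  have t2 : ∑ l ∈ Finset.range N, (if l = a then F l else 0) = F a := by
    rw [key a, if_pos ha]
  have t3 : ∑ l ∈ Finset.range N, (if l = a + 1 then F l else 0)
      = if a + 1 < N then F (a + 1) else 0 := key (a + 1)
  have t1 : ∑ l ∈ Finset.range N, (if l + 1 = a then F l else 0)
      = if 1 ≤ a then F (a - 1) else 0 := by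
    rcases a with _ | b
    · simp
    · have : ∀ l, (if l + 1 = b + 1 then F l else 0) = (if l = b then F l else 0) := by
        intro l; by_cases hl : l = b
        · rw [if_pos (by omega), if_pos hl]
        · rw [if_neg (by omega), if_neg hl]
      rw [Finset.sum_congr rfl fun l _ => this l, key b, if_pos (by omega : b < N),
        if_pos (by omega : 1 ≤ b + 1), Nat.add_sub_cancel]
  rw [t1, t2, t3]

lemma left_entry (N : ℕ) (ω : ℝ) (z w δ α β : ℂ) (j k : Fin N) :
    ((Hmat N ω)ᴴ * GMat N z w δ α β) j k
      = (if 1 ≤ (j : ℕ) then -Gf z w δ α β ((j : ℕ) - 1) (k : ℕ) else 0)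
        + (if (j : ℕ) = 0 then -(1 - Complex.I * (ω : ℂ))
            else if (j : ℕ) = N - 1 then -(1 + Complex.I * (ω : ℂ)) else 0)
            * Gf z w δ α β (j : ℕ) (k : ℕ)
        + (if (j : ℕ) + 1 < N then -Gf z w δ α β ((j : ℕ) + 1) (k : ℕ) else 0) := by
  classical
  rw [Matrix.mul_apply]
  set F : ℕ → ℂ := fun l =>
    if h : l < N then star (Hmat N ω ⟨l, h⟩ j) * Gf z w δ α β l (k : ℕ) else 0 with hF
  have h0 : ∑ l : Fin N, (Hmat N ω)ᴴ j l * GMat N z w δ α β l k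
      = ∑ l ∈ Finset.range N, F l := by
    rw [← Fin.sum_univ_eq_sum_range]
    refine Finset.sum_congr rfl fun l _ => ?_
    rw [hF]; simp only [l.isLt, dif_pos, Fin.eta, Matrix.conjTranspose_apply]
    rfl
  rw [h0, sum_three N (j : ℕ) j.isLt F ?_]
  · congr 1
    · congr 1
      · by_cases hj : 1 ≤ (j : ℕ)
        · simp only [if_pos hj, hF]
          rw [dif_pos (show (j:ℕ) - 1 < N by omega)]
          have : Hmat N ω ⟨(j:ℕ) - 1, by omega⟩ j = -1 := by
            show (if _ then _ else _) = _
            rw [if_neg (by simp; try omega),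
              if_pos (by simp; try omega)]
          rw [this]; simp
        · rw [if_neg hj, if_neg hj]
      · simp only [hF]
        rw [dif_pos j.isLt]
        have : (⟨(j : ℕ), j.isLt⟩ : Fin N) = j := Fin.eta j j.isLt
        rw [this]
        congr 1
        show star (if _ then _ else _) = _
        rw [if_pos rfl]
        by_cases h0 : (j : ℕ) = 0
        · rw [if_pos h0, if_pos h0]
          simp [Complex.ext_iff]
        · rw [if_neg h0, if_neg h0]
          by_cases h1 : (j : ℕ) = N - 1
          · rw [if_pos h1, if_pos h1]; simp [Complex.ext_iff]
          · rw [if_neg h1, if_neg h1]; simp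
    · by_cases hj : (j : ℕ) + 1 < N
      · simp only [if_pos hj, hF]
        rw [dif_pos hj]
        have : Hmat N ω ⟨(j:ℕ) + 1, hj⟩ j = -1 := by
          show (if _ then _ else _) = _
          rw [if_neg (by simp; try omega),
            if_pos (by simp; try omega)]
        rw [this]; simp
      · rw [if_neg hj, if_neg hj]
  · intro l hl h1 h2 h3
    simp only [hF]
    rw [dif_pos hl]
    have : Hmat N ω ⟨l, hl⟩ j = 0 := by
      show (if _ then _ else _) = _
      rw [if_neg (by simp; try omega),
        if_neg (by simp; try omega)]
    rw [this]; simp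

lemma right_entry (N : ℕ) (ω : ℝ) (z w δ α β : ℂ) (j k : Fin N) :
    (GMat N z w δ α β * Hmat N ω) j k
      = (if 1 ≤ (k : ℕ) then -Gf z w δ α β (j : ℕ) ((k : ℕ) - 1) else 0)
        + Gf z w δ α β (j : ℕ) (k : ℕ)
            * (if (k : ℕ) = 0 then -(1 + Complex.I * (ω : ℂ))
               else if (k : ℕ) = N - 1 then -(1 - Complex.I * (ω : ℂ)) else 0)
        + (if (k : ℕ) + 1 < N then -Gf z w δ α β (j : ℕ) ((k : ℕ) + 1) else 0) := by
  classical
  rw [Matrix.mul_apply]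
  set F : ℕ → ℂ := fun l =>
    if h : l < N then Gf z w δ α β (j : ℕ) l * Hmat N ω ⟨l, h⟩ k else 0 with hF
  have h0 : ∑ l : Fin N, GMat N z w δ α β j l * Hmat N ω l k
      = ∑ l ∈ Finset.range N, F l := by
    rw [← Fin.sum_univ_eq_sum_range]
    refine Finset.sum_congr rfl fun l _ => ?_
    rw [hF]; simp only [l.isLt, dif_pos, Fin.eta]
    rfl
  rw [h0, sum_three N (k : ℕ) k.isLt F ?_]
  · congr 1
    · congr 1
      · by_cases hk : 1 ≤ (k : ℕ)
        · simp only [if_pos hk, hF]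
          rw [dif_pos (show (k:ℕ) - 1 < N by omega)]
          have : Hmat N ω ⟨(k:ℕ) - 1, by omega⟩ k = -1 := by
            show (if _ then _ else _) = _
            rw [if_neg (by simp; try omega), if_pos (by simp; try omega)]
          rw [this]; ring
        · rw [if_neg hk, if_neg hk]
      · simp only [hF]
        rw [dif_pos k.isLt]
        have : (⟨(k : ℕ), k.isLt⟩ : Fin N) = k := Fin.eta k k.isLt
        rw [this]
        congr 1
        show (if _ then _ else _) = _
        rw [if_pos rfl]
        by_cases h0 : (k : ℕ) = 0
        · rw [if_pos h0, if_pos h0]; ring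
        · rw [if_neg h0, if_neg h0]
          by_cases h1 : (k : ℕ) = N - 1
          · rw [if_pos h1, if_pos h1]; ring
          · rw [if_neg h1, if_neg h1]
    · by_cases hk : (k : ℕ) + 1 < N
      · simp only [if_pos hk, hF]
        rw [dif_pos hk]
        have : Hmat N ω ⟨(k:ℕ) + 1, hk⟩ k = -1 := by
          show (if _ then _ else _) = _
          rw [if_neg (by simp; try omega), if_pos (by simp; try omega)]
        rw [this]; ring
      · rw [if_neg hk, if_neg hk]
  · intro l hl h1 h2 h3
    simp only [hF]
    rw [dif_pos hl]
    have : Hmat N ω ⟨l, hl⟩ k = 0 := by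
      show (if _ then _ else _) = _
      rw [if_neg (by simp; try omega), if_neg (by simp; try omega)]
    rw [this]; ring

lemma Gf_diag {z w δ α β : ℂ} {a b : ℕ} (h : a = b) : Gf z w δ α β a b = δ := if_pos h
lemma Gf_up {z w δ α β : ℂ} {a b : ℕ} (h : a < b) :
    Gf z w δ α β a b = α * z ^ (b - a - 1) := by
  rw [Gf, if_neg (by omega), if_pos h]
lemma Gf_lo {z w δ α β : ℂ} {a b : ℕ} (h : b < a) :
    Gf z w δ α β a b = β * w ^ (a - b - 1) := by
  rw [Gf, if_neg (by omega), if_neg (by omega)]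

lemma key (N : ℕ) (hN : 2 ≤ N) (z w δ α β : ℂ) (hrel : α - β = (z - w) * δ)
    (a b : ℕ) (ha : a < N) (hb : b < N) :
    (if 1 ≤ a then -Gf z w δ α β (a - 1) b else 0)
      + (if a = 0 then -z else if a = N - 1 then -w else 0) * Gf z w δ α β a b
      + (if a + 1 < N then -Gf z w δ α β (a + 1) b else 0)
    = (if 1 ≤ b then -Gf z w δ α β a (b - 1) else 0)
      + Gf z w δ α β a b * (if b = 0 then -w else if b = N - 1 then -z else 0)
      + (if b + 1 < N then -Gf z w δ α β a (b + 1) else 0) := by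
  rcases Nat.lt_trichotomy a b with hab | rfl | hab
  · -- a < b
    have e2 : Gf z w δ α β (a + 1) b = Gf z w δ α β a (b - 1) := by
      rcases Nat.lt_or_ge (a + 1) b with h' | h'
      · rw [Gf_up h', Gf_up (by omega), show b - (a+1) - 1 = b - 1 - a - 1 from by omega]
      · rw [Gf_diag (by omega), Gf_diag (by omega)]
    rw [if_pos (show 1 ≤ b by omega), if_pos (show a + 1 < N by omega), e2, Gf_up hab]
    have e3 : (if 1 ≤ a then -Gf z w δ α β (a - 1) b else 0)
        + (if a = 0 then -z else if a = N - 1 then -w else 0) * (α * z ^ (b - a - 1))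
        = -(α * z ^ (b - a)) := by
      by_cases h0 : a = 0
      · subst h0
        rw [if_neg (by omega), if_pos rfl]
        generalize hE : b - 0 - 1 = m
        rw [show b - 0 = m + 1 from by omega, pow_succ]
        ring
      · rw [if_pos (by omega), if_neg h0, if_neg (by omega),
          Gf_up (show a - 1 < b by omega), show b - (a-1) - 1 = b - a from by omega]
        ring
    have e4 : (α * z ^ (b - a - 1))
          * (if b = 0 then -w else if b = N - 1 then -z else 0)
        + (if b + 1 < N then -Gf z w δ α β a (b + 1) else 0)
        = -(α * z ^ (b - a)) := by
      by_cases hbN : b + 1 < N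
      · rw [if_pos hbN, if_neg (by omega), if_neg (by omega),
          Gf_up (show a < b + 1 by omega), show b + 1 - a - 1 = b - a from by omega]
        ring
      · rw [if_neg hbN, if_neg (by omega), if_pos (by omega)]
        generalize hE : b - a - 1 = m
        rw [show b - a = m + 1 from by omega, pow_succ]
        ring
    linear_combination e3 - e4
  · -- a = b
    rw [Gf_diag rfl]
    by_cases h0 : a = 0
    · subst h0
      have c1 : ¬((0:ℕ) = N - 1) := by omega
      have c2 : 0 + 1 < N := by omega
      simp only [c1, c2, if_true, if_false, show ¬((1:ℕ) ≤ 0) from by omega,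
        if_pos rfl, Gf_lo (by omega : (0:ℕ) < 0 + 1), Gf_up (by omega : (0:ℕ) < 0 + 1),
        Nat.sub_self, Nat.add_sub_cancel, pow_zero, mul_one]
      linear_combination hrel
    · have hc : 1 ≤ a := by omega
      have g1 : Gf z w δ α β (a - 1) a = α := by
        rw [Gf_up (by omega : a - 1 < a), show a - (a-1) - 1 = 0 from by omega,
          pow_zero, mul_one]
      have g2 : Gf z w δ α β a (a - 1) = β := by
        rw [Gf_lo (by omega : a - 1 < a), show a - (a-1) - 1 = 0 from by omega,
          pow_zero, mul_one]
      by_cases h1 : a = N - 1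
      · have c3 : ¬(a + 1 < N) := by omega
        simp only [hc, c3, if_true, if_false, if_neg h0, if_pos h1, g1, g2]
        linear_combination -hrel
      · have c3 : a + 1 < N := by omega
        have g3 : Gf z w δ α β (a + 1) a = β := by
          rw [Gf_lo (by omega : a < a + 1), show a + 1 - a - 1 = 0 from by omega,
            pow_zero, mul_one]
        have g4 : Gf z w δ α β a (a + 1) = α := by
          rw [Gf_up (by omega : a < a + 1), show a + 1 - a - 1 = 0 from by omega,
            pow_zero, mul_one]
        simp only [hc, c3, if_true, if_neg h0, if_neg h1, g1, g2, g3, g4]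
        ring
  · -- b < a
    have e2 : Gf z w δ α β (a - 1) b = Gf z w δ α β a (b + 1) := by
      rcases Nat.lt_or_ge (b + 1) a with h' | h'
      · rw [Gf_lo (by omega), Gf_lo h', show a - 1 - b - 1 = a - (b+1) - 1 from by omega]
      · rw [Gf_diag (by omega), Gf_diag (by omega)]
    rw [if_pos (show 1 ≤ a by omega), if_pos (show b + 1 < N by omega), e2, Gf_lo hab]
    have e3 : (if a = 0 then -z else if a = N - 1 then -w else 0) * (β * w ^ (a - b - 1))
        + (if a + 1 < N then -Gf z w δ α β (a + 1) b else 0)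
        = -(β * w ^ (a - b)) := by
      by_cases haN : a + 1 < N
      · rw [if_pos haN, if_neg (by omega), if_neg (by omega),
          Gf_lo (show b < a + 1 by omega), show a + 1 - b - 1 = a - b from by omega]
        ring
      · rw [if_neg haN, if_neg (by omega), if_pos (by omega)]
        generalize hE : a - b - 1 = m
        rw [show a - b = m + 1 from by omega, pow_succ]
        ring
    have e4 : (if 1 ≤ b then -Gf z w δ α β a (b - 1) else 0)
        + (β * w ^ (a - b - 1)) * (if b = 0 then -w else if b = N - 1 then -z else 0)
        = -(β * w ^ (a - b)) := by
      by_cases h0 : b = 0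
      · subst h0
        rw [if_neg (by omega), if_pos rfl]
        generalize hE : a - 0 - 1 = m
        rw [show a - 0 = m + 1 from by omega, pow_succ]
        ring
      · rw [if_pos (by omega), if_neg h0, if_neg (by omega),
          Gf_lo (show b - 1 < a by omega), show a - (b-1) - 1 = a - b from by omega]
        ring
    linear_combination e3 - e4


lemma gen_rel (N : ℕ) (hN : 2 ≤ N) (ω : ℝ) (δ α β : ℂ)
    (hrel : α - β = ((1 - Complex.I * (ω:ℂ)) - (1 + Complex.I * (ω:ℂ))) * δ) :
    (Hmat N ω)ᴴ * GMat N (1 - Complex.I * (ω:ℂ)) (1 + Complex.I * (ω:ℂ)) δ α β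
      = GMat N (1 - Complex.I * (ω:ℂ)) (1 + Complex.I * (ω:ℂ)) δ α β * Hmat N ω := by
  ext j k
  rw [left_entry, right_entry]
  exact key N hN _ _ δ α β hrel (j : ℕ) (k : ℕ) j.isLt k.isLt

lemma gen_herm (N : ℕ) (z w δ α β : ℂ) (hδ : star δ = δ) (hα : star α = β)
    (hz : star z = w) : (GMat N z w δ α β).IsHermitian := by
  have hβ : star β = α := by rw [← hα, star_star]
  have hw : star w = z := by rw [← hz, star_star]
  show _ᴴ = _
  ext j k
  rw [Matrix.conjTranspose_apply]
  show star (Gf z w δ α β (k : ℕ) (j : ℕ)) = Gf z w δ α β (j : ℕ) (k : ℕ)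
  rcases Nat.lt_trichotomy (j : ℕ) (k : ℕ) with h | h | h
  · rw [Gf_lo h, Gf_up h, star_mul', star_pow, hβ, hw]
  · rw [Gf_diag h.symm, Gf_diag h, hδ]
  · rw [Gf_up h, Gf_lo h, star_mul', star_pow, hα, hz]

lemma theta1_eq (N : ℕ) (ω : ℝ) :
    Theta1 N ω = GMat N (1 - Complex.I * (ω:ℂ)) (1 + Complex.I * (ω:ℂ)) 0 1 1 := by
  ext j k
  simp only [Theta1, GMat, Gf, Matrix.of_apply, one_mul]

lemma theta_eq (N : ℕ) (ω : ℝ) :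
    Theta N ω = GMat N (1 - Complex.I * (ω:ℂ)) (1 + Complex.I * (ω:ℂ)) 1
      (-(Complex.I * (ω:ℂ))) (Complex.I * (ω:ℂ)) := by
  ext j k
  simp only [Theta, GMat, Gf, Matrix.of_apply]
  split_ifs <;> ring

lemma star_z (ω : ℝ) : star (1 - Complex.I * (ω:ℂ)) = 1 + Complex.I * (ω:ℂ) := by
  simp [Complex.ext_iff]

end Aux

/-- `Θ₁^{(N)}(ω)` is Hermitian and satisfies the Dieudonné relation; consequently every real
combination `Θ^{(N)}(ω) + u·Θ₁^{(N)}(ω)` is Hermitian and satisfies the Dieudonné relation. -/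
theorem stmt2 (N : ℕ) (hN : 2 ≤ N) (ω : ℝ) :
    (Theta1 N ω).IsHermitian ∧
    (Hmat N ω)ᴴ * Theta1 N ω = Theta1 N ω * Hmat N ω ∧
    ∀ u : ℝ,
      (Theta N ω + u • Theta1 N ω).IsHermitian ∧
      (Hmat N ω)ᴴ * (Theta N ω + u • Theta1 N ω)
        = (Theta N ω + u • Theta1 N ω) * Hmat N ω := by
  have herm1 : (Theta1 N ω).IsHermitian := by
    rw [theta1_eq]
    exact gen_herm N _ _ _ _ _ (star_zero ℂ) (star_one ℂ) (star_z ω)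
  have herm : (Theta N ω).IsHermitian := by
    rw [theta_eq]
    refine gen_herm N _ _ _ _ _ (star_one ℂ) ?_ (star_z ω)
    simp [Complex.ext_iff]
  have rel1 : (Hmat N ω)ᴴ * Theta1 N ω = Theta1 N ω * Hmat N ω := by
    rw [theta1_eq]
    exact gen_rel N hN ω 0 1 1 (by ring)
  have rel : (Hmat N ω)ᴴ * Theta N ω = Theta N ω * Hmat N ω := by
    rw [theta_eq]
    exact gen_rel N hN ω 1 _ _ (by ring)
  refine ⟨herm1, rel1, fun u => ⟨?_, ?_⟩⟩
  · have h2 : (u • Theta1 N ω).IsHermitian := by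
      show _ᴴ = _
      rw [Matrix.conjTranspose_smul, star_trivial, herm1.eq]
    exact herm.add h2
  · rw [Matrix.mul_add, Matrix.add_mul, rel, Matrix.mul_smul, Matrix.smul_mul, rel1]
end

section
/- For every integer N ≥ 2 and all y, z ∈ ℂ, the determinant of M^{(N)}(y,z) equals (z·conj z)·U_{N−2}(y) − (z + conj z)·U_{N−1}(y) + U_N(y), where U_n is the n-th Chebyshev polynomial of the second kind evaluated at y. -/
open Matrix

/-- Chebyshev polynomials of the second kind (as functions on ℂ):
`U 0 y = 1`, `U 1 y = 2y`, `U (n+2) y = 2y·U (n+1) y − U n y`. -/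
noncomputable def chebU : ℕ → ℂ → ℂ
  | 0, _ => 1
  | 1, y => 2 * y
  | n + 2, y => 2 * y * chebU (n + 1) y - chebU n y

/-- The N×N tridiagonal matrix `M^{(N)}(y,z)` with diagonal
`(2y−z, 2y, …, 2y, 2y−conj z)` and `−1` on the subdiagonal and superdiagonal. -/
noncomputable def Mmat (N : ℕ) (y z : ℂ) : Matrix (Fin N) (Fin N) ℂ :=
  Matrix.of fun j k =>
    if (j : ℕ) = (k : ℕ) then
      (if (j : ℕ) = 0 then 2 * y - z
       else if (j : ℕ) = N - 1 then 2 * y - starRingEnd ℂ z else 2 * y)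
    else if (j : ℕ) + 1 = (k : ℕ) ∨ (k : ℕ) + 1 = (j : ℕ) then -1 else 0

/-- General tridiagonal matrix with diagonal `d` and `-1` off-diagonal. -/
noncomputable def T (d : ℕ → ℂ) (n : ℕ) : Matrix (Fin n) (Fin n) ℂ :=
  Matrix.of fun j k =>
    if (j : ℕ) = (k : ℕ) then d j
    else if (j : ℕ) + 1 = (k : ℕ) ∨ (k : ℕ) + 1 = (j : ℕ) then -1 else 0

set_option linter.unreachableTactic false in
set_option linter.unusedTactic false in
theorem Trec (n : ℕ) (d : ℕ → ℂ) :
    (T d (n+2)).det = d 0 * (T (fun k => d (k+1)) (n+1)).det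
      - (T (fun k => d (k+2)) n).det := by
  have h1 : (T d (n+2)).submatrix Fin.succ ((0 : Fin (n+2)).succAbove)
      = T (fun k => d (k+1)) (n+1) := by
    ext i j
    simp only [T, submatrix_apply, Fin.succAbove_zero, of_apply, Fin.val_succ]
    split_ifs <;> first | rfl | omega
  -- the (0,1)-minor
  set M1 := (T d (n+2)).submatrix Fin.succ ((1 : Fin (n+2)).succAbove) with hM1
  have h2 : M1.det = -(T (fun k => d (k+2)) n).det := by
    have h3 : M1.submatrix ((0 : Fin (n+1)).succAbove) Fin.succ
        = T (fun k => d (k+2)) n := by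
      ext i j
      simp only [hM1, T, submatrix_apply, Fin.succAbove_zero, of_apply, Fin.val_succ,
        Fin.succAbove, Fin.lt_def, Fin.coe_castSucc, Fin.val_one]
      split_ifs <;> simp_all <;> omega
    have hcol : ∀ i : Fin (n+1), M1 i 0 = if (i : ℕ) = 0 then -1 else 0 := by
      intro i
      simp only [hM1, T, submatrix_apply, of_apply, Fin.val_succ, Fin.succAbove,
        Fin.lt_def, Fin.coe_castSucc, Fin.val_one, Fin.val_zero]
      split_ifs <;> simp_all <;> omega
    rw [Matrix.det_succ_column_zero, Fin.sum_univ_succ, h3]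
    rw [hcol, Finset.sum_eq_zero (fun j _ => by rw [hcol]; simp [Fin.val_succ])]
    simp
  rw [Matrix.det_succ_row_zero, Fin.sum_univ_succ, Fin.sum_univ_succ, h1]
  simp only [Fin.succ_zero_eq_one]
  rw [← hM1, h2]
  have e00 : (T d (n+2)) 0 0 = d 0 := by simp [T]
  have e01 : (T d (n+2)) 0 1 = -1 := by
    simp only [T, of_apply, Fin.val_zero, Fin.val_one]
    norm_num
  rw [e00, e01,
    Finset.sum_eq_zero (fun j _ => by
      have : (T d (n+2)) 0 (j.succ.succ) = 0 := by
        simp only [T, of_apply, Fin.val_succ, Fin.val_zero]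
        split_ifs <;> simp_all
      rw [this]; ring)]
  simp
  ring

theorem detA (w y : ℂ) : ∀ n : ℕ,
    (T (fun k => if k = n then 2*y - w else 2*y) (n+1)).det
      = chebU (n+1) y - w * chebU n y := by
  intro n
  induction n using Nat.twoStepInduction with
  | zero =>
      rw [show (0:ℕ)+1 = 1 from rfl, Matrix.det_fin_one]
      simp [T, chebU]
  | one =>
      rw [show (1:ℕ)+1 = 2 from rfl, Matrix.det_fin_two]
      simp only [T, of_apply, Fin.val_zero, Fin.val_one]
      norm_num [chebU]
      ring
  | more n ih ih1 =>
      rw [show n+2+1 = n+1+2 from rfl, Trec]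
      have e1 : (fun k => if k + 1 = n + 2 then 2*y - w else 2*y)
          = (fun k => if k = n + 1 then 2*y - w else 2*y) := by
        funext k; by_cases h : k = n + 1 <;> simp [h] <;> omega
      have e2 : (fun k => if k + 2 = n + 2 then 2*y - w else 2*y)
          = (fun k => if k = n then 2*y - w else 2*y) := by
        funext k; by_cases h : k = n <;> simp [h] <;> omega
      rw [e1, e2, if_neg (by omega : ¬ (0:ℕ) = n + 2), ih1, ih]
      simp only [show chebU (n+1+2) y = 2*y*chebU (n+1+1) y - chebU (n+1) y from rfl,
        show chebU (n+2) y = 2*y*chebU (n+1) y - chebU n y from rfl]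
      ring

/-- For every `N ≥ 2` and `y, z ∈ ℂ`:
`det M^{(N)}(y,z) = z·conj z·U_{N−2}(y) − (z + conj z)·U_{N−1}(y) + U_N(y)`. -/
theorem stmt4 (N : ℕ) (hN : 2 ≤ N) (y z : ℂ) :
    (Mmat N y z).det =
      z * starRingEnd ℂ z * chebU (N - 2) y
        - (z + starRingEnd ℂ z) * chebU (N - 1) y + chebU N y := by
  obtain ⟨n, rfl⟩ : ∃ n, N = n + 2 := ⟨N - 2, by omega⟩
  set c := starRingEnd ℂ z with hc
  have hM : Mmat (n+2) y z
      = T (fun j => if j = 0 then 2*y - z else if j = (n+2) - 1 then 2*y - c else 2*y) (n+2) := rfl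
  rw [hM, Trec]
  have e1 : (fun k => if k + 1 = 0 then 2*y - z else if k + 1 = (n+2) - 1 then 2*y - c else 2*y)
      = (fun k => if k = n then 2*y - c else 2*y) := by
    funext k
    rw [if_neg (by omega)]
    by_cases h : k = n
    · rw [if_pos (by omega), if_pos h]
    · rw [if_neg (by omega), if_neg h]
  rw [if_pos rfl, e1, detA]
  simp only [show n + 2 - 2 = n from rfl, show n + 2 - 1 = n + 1 from rfl]
  match n with
  | 0 =>
      rw [Matrix.det_fin_zero]
      norm_num [chebU]
      ring
  | m + 1 =>
      have e2 : (fun k => if k + 2 = 0 then 2*y - z else if k + 2 = m + 1 + 1 then 2*y - c else 2*y)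
          = (fun k => if k = m then 2*y - c else 2*y) := by
        funext k
        rw [if_neg (by omega)]
        by_cases h : k = m
        · rw [if_pos (by omega), if_pos h]
        · rw [if_neg (by omega), if_neg h]
      rw [e2, detA]
      simp only [show chebU (m+1+2) y = 2*y*chebU (m+1+1) y - chebU (m+1) y from rfl,
        show chebU (m+2) y = 2*y*chebU (m+1) y - chebU m y from rfl]
      ring
end

section
/- For every integer N ≥ 2 there exists ε > 0 such that for every z ∈ ℂ with |z − 1| < ε, the polynomial P_{N,z} (a degree-N polynomial with real coefficients) has exactly N roots, all of which are real and simple (i.e., N pairwise distinct real roots). -/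
/-- The secular polynomial `P_{N,z}(y) = z·conj z·U_{N−2}(y) − (z+conj z)·U_{N−1}(y) + U_N(y)`. -/
noncomputable def Psec (N : ℕ) (z y : ℂ) : ℂ :=
  z * starRingEnd ℂ z * chebU (N - 2) y
    - (z + starRingEnd ℂ z) * chebU (N - 1) y + chebU N y

/-!
On real arguments `P_{N,z}` is the real polynomial `|z|² U_{N-2} - 2 (Re z) U_{N-1} + U_N`, of
degree `N`. At `z = 1` it equals `2 (X - 1) U_{N-1}`, which by `U_{N-1}(cos θ) sin θ = sin (N θ)`
alternates strictly in sign along the `N + 1` decreasing points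
`cosh 1 > cos (π/2N) > cos (3π/2N) > ⋯ > cos ((2N-1)π/2N)`. These finitely many strict
inequalities survive a small perturbation of `z`, so by the intermediate value theorem `P_{N,z}`
keeps a real root between any two consecutive points; being of degree `N`, it has no others.
-/

open Polynomial Real Filter Topology

lemma exists_mem_Ioo_eq_zero_of_mul_neg {f : ℝ → ℝ} {a b : ℝ} (hab : a ≤ b)
    (hf : ContinuousOn f (Set.Icc a b)) (h : f a * f b < 0) : ∃ c ∈ Set.Ioo a b, f c = 0 := by
  rcases mul_neg_iff.1 h with ⟨ha, hb⟩ | ⟨ha, hb⟩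
  · exact intermediate_value_Ioo' hab hf ⟨hb, ha⟩
  · exact intermediate_value_Ioo hab hf ⟨ha, hb⟩

lemma exists_finset_card_eq_zeros_of_alternating {f : ℝ → ℝ} (hf : Continuous f) {x : ℕ → ℝ}
    {n : ℕ} (hx : ∀ k < n, x (k + 1) < x k) (hs : ∀ k ≤ n, 0 < (-1) ^ k * f (x k)) :
    ∃ S : Finset ℝ, S.card = n ∧ ∀ r ∈ S, x n < r ∧ f r = 0 := by
  induction n with
  | zero => exact ⟨∅, rfl, by simp⟩
  | succ n ih =>
    obtain ⟨S, hcard, hS⟩ := ih (fun k hk ↦ hx k (by omega)) (fun k hk ↦ hs k (by omega))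
    have hsign : f (x (n + 1)) * f (x n) < 0 := by
      have h₁ := hs n (by omega)
      have h₂ := hs (n + 1) le_rfl
      rcases neg_one_pow_eq_or ℝ n with h | h <;>
        simp only [pow_succ, h] at h₁ h₂ <;> nlinarith
    have hxn := hx n n.lt_succ_self
    obtain ⟨c, hc, hfc⟩ := exists_mem_Ioo_eq_zero_of_mul_neg hxn.le hf.continuousOn hsign
    have hcS : c ∉ S := fun h ↦ (hS c h).1.not_gt hc.2
    refine ⟨insert c S, by rw [Finset.card_insert_of_notMem hcS, hcard], fun r hr ↦ ?_⟩
    rcases Finset.mem_insert.1 hr with rfl | hr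
    · exact ⟨hc.1, hfc⟩
    · exact ⟨hxn.trans (hS r hr).1, (hS r hr).2⟩

lemma Polynomial.isRoot_iff_mem_of_card_eq_natDegree {R : Type*} [CommRing R] [IsDomain R]
    {p : R[X]} (hp : p ≠ 0) {s : Finset R} (hs : s.card = p.natDegree)
    (hroots : ∀ x ∈ s, p.IsRoot x) (y : R) : p.IsRoot y ↔ y ∈ s := by
  have hle : s.val ≤ p.roots :=
    (Multiset.le_iff_subset s.nodup).2 fun x hx ↦ (mem_roots hp).2 (hroots x hx)
  have heq : s.val = p.roots := Multiset.eq_of_le_of_card_le hle ((card_roots' p).trans hs.ge)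
  rw [← mem_roots hp, ← heq, Finset.mem_val]

lemma chebU_eq_eval_U (n : ℕ) (y : ℂ) : chebU n y = (Chebyshev.U ℂ n).eval y := by
  induction n using Nat.twoStepInduction with
  | zero => simp [chebU]
  | one => simp [chebU]
  | more n ih₁ ih₂ =>
    rw [chebU, ih₁, ih₂]
    push_cast
    simp [Chebyshev.U_add_two]

noncomputable def secularPoly (N : ℕ) (z : ℂ) : ℝ[X] :=
  C (Complex.normSq z) * Chebyshev.U ℝ ↑(N - 2) - C (2 * z.re) * Chebyshev.U ℝ ↑(N - 1)
    + Chebyshev.U ℝ N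

lemma Psec_eq_aeval_secularPoly (N : ℕ) (z y : ℂ) : Psec N z y = aeval y (secularPoly N z) := by
  simp [Psec, secularPoly, chebU_eq_eval_U, Complex.mul_conj, Complex.add_conj, Chebyshev.aeval_U]

lemma secularPoly_one {N : ℕ} (hN : 2 ≤ N) :
    secularPoly N 1 = 2 * (X - 1) * Chebyshev.U ℝ ↑(N - 1) := by
  have hU := Chebyshev.U_eq ℝ (N : ℤ)
  rw [show (N : ℤ) - 1 = ↑(N - 1) by omega, show (N : ℤ) - 2 = ↑(N - 2) by omega] at hU
  rw [secularPoly, hU]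
  simp only [Complex.one_re, map_one, mul_one, one_mul]
  rw [show C (2 : ℝ) = 2 from rfl]
  ring

lemma continuous_eval_secularPoly (N : ℕ) (t : ℝ) :
    Continuous fun z : ℂ ↦ (secularPoly N z).eval t := by
  simp only [secularPoly, eval_add, eval_sub, eval_mul, eval_C]
  fun_prop

lemma degree_C_mul_U_sub_C_mul_U_lt {N : ℕ} (hN : N ≠ 0) (a b : ℝ) :
    (C a * Chebyshev.U ℝ ↑(N - 2) - C b * Chebyshev.U ℝ ↑(N - 1)).degree
      < (Chebyshev.U ℝ N).degree := by
  have h : (C a * Chebyshev.U ℝ ↑(N - 2) - C b * Chebyshev.U ℝ ↑(N - 1)).natDegree ≤ N - 1 := by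
    refine (natDegree_sub_le _ _).trans (max_le ?_ ?_) <;>
      exact (natDegree_C_mul_le _ _).trans
        ((Chebyshev.natDegree_U_natCast ℝ _).trans_le (by omega))
  rw [Chebyshev.degree_U_natCast]
  exact (degree_le_of_natDegree_le h).trans_lt (by exact_mod_cast Nat.sub_one_lt hN)

lemma natDegree_secularPoly {N : ℕ} (hN : N ≠ 0) (z : ℂ) : (secularPoly N z).natDegree = N := by
  rw [secularPoly, natDegree_add_eq_right_of_degree_lt (degree_C_mul_U_sub_C_mul_U_lt hN _ _),
    Chebyshev.natDegree_U_natCast]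

lemma leadingCoeff_secularPoly {N : ℕ} (hN : N ≠ 0) (z : ℂ) :
    (secularPoly N z).leadingCoeff = 2 ^ N := by
  rw [secularPoly, leadingCoeff_add_of_degree_lt (degree_C_mul_U_sub_C_mul_U_lt hN _ _),
    Chebyshev.leadingCoeff_U_natCast]

lemma eval_secularPoly_one_cosh_pos {N : ℕ} (hN : 2 ≤ N) {θ : ℝ} (hθ : 0 < θ) :
    0 < (secularPoly N 1).eval (cosh θ) := by
  have hU : (Chebyshev.U ℝ ↑(N - 1)).eval (cosh θ) * sinh θ = sinh (N * θ) := by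
    rw [Chebyshev.U_real_cosh]
    push_cast [Nat.cast_sub (by omega : 1 ≤ N)]
    ring_nf
  have hU_pos : 0 < (Chebyshev.U ℝ ↑(N - 1)).eval (cosh θ) :=
    (mul_pos_iff_of_pos_right (sinh_pos_iff.2 hθ)).1 (hU ▸ sinh_pos_iff.2 (by positivity))
  have hcosh : 1 < cosh θ := one_lt_cosh.2 hθ.ne'
  rw [secularPoly_one hN]
  simp only [eval_mul, eval_sub, eval_X, eval_one, eval_ofNat]
  exact mul_pos (mul_pos two_pos (sub_pos.2 hcosh)) hU_pos

lemma neg_one_pow_mul_eval_secularPoly_one_cos_pos {N : ℕ} (hN : 2 ≤ N) {j : ℕ} (hj : j < N) :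
    0 < (-1) ^ (j + 1) * (secularPoly N 1).eval (cos ((j + 1 / 2) * π / N)) := by
  set θ := (j + 1 / 2) * π / N with hθ
  have hN₀ : (0 : ℝ) < N := by exact_mod_cast (by omega : 0 < N)
  have hθ₀ : 0 < θ := by positivity
  have hθπ : θ < π := by
    rw [hθ, div_lt_iff₀ hN₀]
    have : (j : ℝ) + 1 ≤ N := by exact_mod_cast hj
    nlinarith [pi_pos]
  have hsin : 0 < sin θ := sin_pos_of_pos_of_lt_pi hθ₀ hθπ
  have hcos : cos θ < 1 := by simpa using cos_lt_cos_of_nonneg_of_le_pi le_rfl hθπ.le hθ₀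
  have hU : (Chebyshev.U ℝ ↑(N - 1)).eval (cos θ) * sin θ = (-1) ^ j := by
    rw [Chebyshev.U_real_cos,
      show (((N - 1 : ℕ) : ℤ) : ℝ) + 1 = N by push_cast [Nat.cast_sub (by omega : 1 ≤ N)]; ring,
      hθ, show (N : ℝ) * ((j + 1 / 2) * π / N) = j * π + π / 2 by field_simp,
      sin_add_pi_div_two, cos_nat_mul_pi]
  have key : (-1) ^ (j + 1) * (secularPoly N 1).eval (cos θ) * sin θ = 2 * (1 - cos θ) := by
    rw [secularPoly_one hN]
    simp only [eval_mul, eval_sub, eval_X, eval_one, eval_ofNat]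
    have hsq : ((-1 : ℝ) ^ j) ^ 2 = 1 := by rw [← pow_mul, mul_comm, pow_mul]; simp
    linear_combination (-1) ^ (j + 1) * 2 * (cos θ - 1) * hU + 2 * (1 - cos θ) * hsq
  exact (mul_pos_iff_of_pos_right hsin).1 (key ▸ by linarith)

noncomputable def secularNode (N : ℕ) : ℕ → ℝ
  | 0 => cosh 1
  | k + 1 => cos ((k + 1 / 2) * π / N)

lemma secularNode_succ_lt {N k : ℕ} (hk : k < N) : secularNode N (k + 1) < secularNode N k := by
  have hN₀ : (0 : ℝ) < N := by exact_mod_cast (by omega : 0 < N)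
  cases k with
  | zero => exact (cos_le_one _).trans_lt (one_lt_cosh.2 one_ne_zero)
  | succ j =>
    refine cos_lt_cos_of_nonneg_of_le_pi (by positivity) ?_ (by gcongr; linarith)
    rw [div_le_iff₀ hN₀]
    have : ((j + 1 : ℕ) : ℝ) + 1 ≤ N := by exact_mod_cast hk
    nlinarith [pi_pos]

lemma neg_one_pow_mul_eval_secularPoly_one_secularNode_pos {N k : ℕ} (hN : 2 ≤ N) (hk : k ≤ N) :
    0 < (-1) ^ k * (secularPoly N 1).eval (secularNode N k) := by
  cases k with
  | zero => simpa [secularNode] using eval_secularPoly_one_cosh_pos hN one_pos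
  | succ j => exact neg_one_pow_mul_eval_secularPoly_one_cos_pos hN (by omega)

/-- For every `N ≥ 2` there is `ε > 0` such that for every `z ∈ ℂ` with `|z − 1| < ε`
the secular polynomial `P_{N,z}` has exactly `N` roots, all real and simple: there are
`N` pairwise distinct real numbers which are roots, and every complex root is one of them. -/
theorem stmt11 (N : ℕ) (hN : 2 ≤ N) :
    ∃ ε > (0 : ℝ), ∀ z : ℂ, ‖z - 1‖ < ε →
      ∃ S : Finset ℝ, S.card = N ∧
        ∀ y : ℂ, Psec N z y = 0 ↔ ∃ r ∈ S, (r : ℂ) = y := by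
  have hsign : ∀ᶠ z in 𝓝 (1 : ℂ), ∀ k ∈ Set.Iic N,
      0 < (-1) ^ k * (secularPoly N z).eval (secularNode N k) :=
    (eventually_all_finite (Set.finite_Iic N)).2 fun k hk ↦
      (continuous_const.mul (continuous_eval_secularPoly N _)).continuousAt.eventually
        (lt_mem_nhds (neg_one_pow_mul_eval_secularPoly_one_secularNode_pos hN hk))
  obtain ⟨ε, hε, hball⟩ := Metric.eventually_nhds_iff.1 hsign
  refine ⟨ε, hε, fun z hz ↦ ?_⟩
  obtain ⟨S, hcard, hS⟩ := exists_finset_card_eq_zeros_of_alternating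
    (secularPoly N z).continuous (fun k hk ↦ secularNode_succ_lt hk)
    (hball (by rwa [Complex.dist_eq]))
  have hN₀ : N ≠ 0 := by omega
  have hp : (secularPoly N z).map (algebraMap ℝ ℂ) ≠ 0 := by
    rw [Polynomial.map_ne_zero_iff (algebraMap ℝ ℂ).injective, ← leadingCoeff_ne_zero,
      leadingCoeff_secularPoly hN₀]
    positivity
  refine ⟨S, hcard, fun y ↦ ?_⟩
  rw [Psec_eq_aeval_secularPoly, ← eval_map_algebraMap, ← IsRoot.def,
    isRoot_iff_mem_of_card_eq_natDegree hp (s := S.image (↑)) ?_ ?_, Finset.mem_image]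
  · rw [Finset.card_image_of_injective _ Complex.ofReal_injective, natDegree_map,
      natDegree_secularPoly hN₀, hcard]
  · simp only [Finset.forall_mem_image]
    intro r hr
    rw [IsRoot.def, eval_map_algebraMap, ← Complex.coe_algebraMap,
      aeval_algebraMap_apply_eq_algebraMap_eval, (hS r hr).2, map_zero]
end

section
/- For every integer N ≥ 2 there exists δ > 0 such that for all ω ∈ ℝ with |ω| < δ, the matrix H^{(N)}(ω) has N pairwise distinct real eigenvalues (its spectrum is real and non-degenerate). -/
open Matrix Polynomial

/-- Chebyshev-like sequence: `Ep n` is (up to shift) the char poly of the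
pure tridiagonal matrix; `Ep 0 = -1`, `Ep 1 = 0`, `Ep (n+2) = X * Ep (n+1) - Ep n`. -/
noncomputable def Ep : ℕ → Polynomial ℝ
  | 0 => -1
  | 1 => 0
  | (n+2) => Polynomial.X * Ep (n+1) - Ep n

lemma Ep_monic : ∀ m : ℕ, (Ep (m+2)).Monic ∧ (Ep (m+2)).natDegree = m := by
  intro m
  induction m using Nat.twoStepInduction with
  | zero => constructor <;> simp [Ep, Polynomial.monic_one]
  | one => constructor <;> simp [Ep, Polynomial.monic_X]
  | more n ih1 ih2 =>
    obtain ⟨hm1, hd1⟩ := ih2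
    obtain ⟨hm0, hd0⟩ := ih1
    have hXm : (Polynomial.X * Ep (n+1+2)).Monic := (Polynomial.monic_X).mul hm1
    have hXd : (Polynomial.X * Ep (n+1+2)).natDegree = n + 2 := by
      rw [Polynomial.natDegree_mul Polynomial.X_ne_zero hm1.ne_zero,
        Polynomial.natDegree_X, hd1]; omega
    have hdeglt : (Ep (n+2)).degree < (Polynomial.X * Ep (n+1+2)).degree := by
      rw [Polynomial.degree_eq_natDegree hm0.ne_zero, Polynomial.degree_eq_natDegree hXm.ne_zero, hd0, hXd]
      exact_mod_cast by omega
    constructor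
    · show (Polynomial.X * Ep (n+1+2) - Ep (n+2)).Monic
      rw [sub_eq_add_neg]
      exact hXm.add_of_left (by simpa using hdeglt)
    · show (Polynomial.X * Ep (n+1+2) - Ep (n+2)).natDegree = n + 2
      rw [sub_eq_add_neg,
        Polynomial.natDegree_add_eq_left_of_degree_lt (by simpa using hdeglt)]
      exact hXd

lemma Ep_degree_le : ∀ n : ℕ, (Ep (n+1)).degree ≤ (n : ℕ) := by
  intro n
  match n with
  | 0 => simp [Ep]
  | (k+1) => rw [Polynomial.degree_eq_natDegree ((Ep_monic k).1).ne_zero, (Ep_monic k).2]; exact_mod_cast Nat.le_succ k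

lemma aeval_Ep_rec (x : ℂ) (n : ℕ) :
    (Polynomial.aeval x) (Ep (n+2)) = x * (Polynomial.aeval x) (Ep (n+1))
      - (Polynomial.aeval x) (Ep n) := by
  show (Polynomial.aeval x) (Polynomial.X * Ep (n+1) - Ep n) = _
  rw [map_sub, _root_.map_mul, Polynomial.aeval_X]

/-- tridiagonal with diagonal `x` except `b` in the last entry, `1` off-diagonal. -/
noncomputable def Tmat (x b : ℂ) (n : ℕ) : Matrix (Fin n) (Fin n) ℂ :=
  Matrix.of fun j k =>
    if (j : ℕ) = (k : ℕ) then (if (j : ℕ) = n - 1 then b else x)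
    else if (j : ℕ) + 1 = (k : ℕ) ∨ (k : ℕ) + 1 = (j : ℕ) then 1 else 0

lemma Tmat_eq_of (x b : ℂ) (n : ℕ) (j k : Fin n) : Tmat x b n j k =
    if (j : ℕ) = (k : ℕ) then (if (j : ℕ) = n - 1 then b else x)
    else if (j : ℕ) + 1 = (k : ℕ) ∨ (k : ℕ) + 1 = (j : ℕ) then 1 else 0 := rfl

lemma Tmat_shift (x b : ℂ) (n : ℕ) :
    (Tmat x b (n+1)).submatrix Fin.succ Fin.succ = Tmat x b n := by
  ext i k
  rw [Matrix.submatrix_apply, Tmat_eq_of, Tmat_eq_of, Fin.val_succ, Fin.val_succ]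
  by_cases h1 : (i : ℕ) = (k : ℕ)
  · rw [if_pos (by omega), if_pos h1]
    by_cases h2 : (i : ℕ) = n - 1
    · rw [if_pos (by omega), if_pos h2]
    · rw [if_neg (by omega), if_neg h2]
  · rw [if_neg (by omega), if_neg h1]
    by_cases h3 : (i:ℕ) + 1 = (k:ℕ) ∨ (k:ℕ) + 1 = (i:ℕ)
    · rw [if_pos (by omega), if_pos h3]
    · rw [if_neg (by omega), if_neg h3]

lemma det_Tmat_minor1 (x b : ℂ) (n : ℕ) : ((Tmat x b (n+2)).submatrix Fin.succ
    ((0 : Fin (n+1)).succ.succAbove)).det = (Tmat x b n).det := by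
  rw [Matrix.det_succ_column_zero, Fin.sum_univ_succ]
  have hcol0 : ((0:Fin (n+1)).succ).succAbove (0 : Fin (n+1)) = 0 := rfl
  have he0 : (Tmat x b (n+2)).submatrix Fin.succ ((0:Fin (n+1)).succ.succAbove) 0 0 = 1 := by
    rw [Matrix.submatrix_apply, hcol0, Tmat_eq_of, if_neg (by simp), if_pos (by simp)]
  have heis : ∀ i : Fin n, (Tmat x b (n+2)).submatrix Fin.succ
      ((0:Fin (n+1)).succ.succAbove) i.succ 0 = 0 := by
    intro i
    rw [Matrix.submatrix_apply, hcol0, Tmat_eq_of,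
      if_neg (by simp [Fin.val_succ]), if_neg (by simp [Fin.val_succ])]
  have hsum0 : ∑ i : Fin n, (-1 : ℂ) ^ ((i.succ : Fin (n+1)) : ℕ) *
      (Tmat x b (n+2)).submatrix Fin.succ ((0:Fin (n+1)).succ.succAbove) i.succ 0 *
      (((Tmat x b (n+2)).submatrix Fin.succ
        ((0:Fin (n+1)).succ.succAbove)).submatrix i.succ.succAbove Fin.succ).det = 0 := by
    apply Finset.sum_eq_zero
    intro i _
    rw [heis i]; ring
  rw [hsum0, he0]
  have hsub : ((Tmat x b (n+2)).submatrix Fin.succ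
      ((0:Fin (n+1)).succ.succAbove)).submatrix ((0 : Fin (n+1)).succAbove) Fin.succ
      = Tmat x b n := by
    rw [Matrix.submatrix_submatrix, Fin.succAbove_zero]
    have hcols : ((0:Fin (n+1)).succ.succAbove) ∘ Fin.succ
        = (Fin.succ ∘ (Fin.succ : Fin n → Fin (n+1))) := by
      funext k
      simp only [Function.comp_apply]
      rw [Fin.succ_succAbove_succ, Fin.succAbove_zero]
    rw [hcols]
    show ((Tmat x b (n+1+1)).submatrix Fin.succ Fin.succ).submatrix Fin.succ Fin.succ = _
    rw [Tmat_shift, Tmat_shift]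
  rw [hsub]
  simp

lemma det_Tmat (x b : ℂ) : ∀ n : ℕ, (Tmat x b n).det
    = b * (Polynomial.aeval x) (Ep (n+1)) - (Polynomial.aeval x) (Ep n) := by
  intro n
  induction n using Nat.twoStepInduction with
  | zero => simp [Ep]
  | one =>
    rw [Matrix.det_fin_one]
    simp [Tmat, Ep]
  | more n ih1 ih2 =>
    rw [Matrix.det_succ_row_zero, Fin.sum_univ_succ, Fin.sum_univ_succ]
    have hT00 : Tmat x b (n+2) 0 0 = x := by
      rw [Tmat_eq_of, if_pos rfl, if_neg (by simp)]
    have hT01 : Tmat x b (n+2) 0 ((0 : Fin (n+1)).succ) = 1 := by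
      rw [Tmat_eq_of, if_neg (by simp), if_pos (by simp)]
    have hT0j : ∀ j : Fin n, Tmat x b (n+2) 0 (j.succ.succ) = 0 := by
      intro j
      rw [Tmat_eq_of, if_neg (by simp), if_neg (by simp [Fin.val_succ])]
    have hrest : ∑ j : Fin n, (-1 : ℂ) ^ ((j.succ.succ : Fin (n+2)) : ℕ) *
        Tmat x b (n+2) 0 (j.succ.succ) *
        ((Tmat x b (n+2)).submatrix Fin.succ (j.succ.succ).succAbove).det = 0 := by
      apply Finset.sum_eq_zero
      intro j _
      rw [hT0j j]; ring
    rw [hrest, hT00, hT01]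
    -- minor at column 0
    have hminor0 : (Tmat x b (n+2)).submatrix Fin.succ ((0 : Fin (n+2)).succAbove)
        = Tmat x b (n+1) := by
      rw [Fin.succAbove_zero]; exact Tmat_shift x b (n+1)
    have hminor1 := det_Tmat_minor1 x b n
    rw [hminor0, hminor1]
    rw [ih2, ih1, aeval_Ep_rec x (n+1), aeval_Ep_rec x n]
    simp only [Fin.val_zero, Fin.val_succ, pow_zero, pow_one, pow_succ]
    ring

/-- The characteristic polynomial (of `x•1 - Hmat (m+2) ω`) as a real polynomial. -/
noncomputable def Qp (m : ℕ) (ω : ℝ) : Polynomial ℝ :=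
  ((Polynomial.X + 1)^2 + Polynomial.C (ω^2)) * Ep (m+2)
    - (2*(Polynomial.X + 1)) * Ep (m+1) + Ep m

lemma sub_Hmat_apply (m : ℕ) (ω : ℝ) (x : ℂ) (j k : Fin (m+2)) :
    (x • (1 : Matrix (Fin (m+2)) (Fin (m+2)) ℂ) - Hmat (m+2) ω) j k =
    if (j : ℕ) = (k : ℕ) then
      (if (j : ℕ) = 0 then x + 1 + Complex.I * ω
       else if (j : ℕ) = (m+2) - 1 then x + 1 - Complex.I * ω else x)
    else if (j : ℕ) + 1 = (k : ℕ) ∨ (k : ℕ) + 1 = (j : ℕ) then 1 else 0 := by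
  have hjk : (j = k) ↔ ((j:ℕ) = (k:ℕ)) := Fin.val_inj.symm
  simp only [Matrix.sub_apply, Matrix.smul_apply, Matrix.one_apply, Hmat, Matrix.of_apply,
    smul_eq_mul]
  by_cases h : (j:ℕ) = (k:ℕ)
  · rw [if_pos h, if_pos (hjk.mpr h), if_pos h, mul_one]
    by_cases h0 : (j:ℕ) = 0
    · rw [if_pos h0, if_pos h0]; ring
    · rw [if_neg h0, if_neg h0]
      by_cases h1 : (j:ℕ) = (m+2) - 1
      · rw [if_pos h1, if_pos h1]; ring
      · rw [if_neg h1, if_neg h1]; ring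
  · rw [if_neg h, if_neg (fun hh => h (hjk.mp hh)), if_neg h, mul_zero]
    by_cases h2 : (j:ℕ) + 1 = (k:ℕ) ∨ (k:ℕ) + 1 = (j:ℕ)
    · rw [if_pos h2, if_pos h2]; ring
    · rw [if_neg h2, if_neg h2]; ring

lemma det_sub_Hmat (m : ℕ) (ω : ℝ) (x : ℂ) :
    (x • (1 : Matrix (Fin (m+2)) (Fin (m+2)) ℂ) - Hmat (m+2) ω).det
      = (Polynomial.aeval x) (Qp m ω) := by
  set b : ℂ := x + 1 - Complex.I * ω with hb
  set M : Matrix (Fin (m+2)) (Fin (m+2)) ℂ :=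
    x • (1 : Matrix (Fin (m+2)) (Fin (m+2)) ℂ) - Hmat (m+2) ω with hM
  have hrows : ∀ (g : Fin (m+1) → Fin (m+2)),
      M.submatrix Fin.succ g = (Tmat x b (m+2)).submatrix Fin.succ g := by
    intro g
    ext i k
    rw [Matrix.submatrix_apply, Matrix.submatrix_apply, hM, sub_Hmat_apply, Tmat_eq_of]
    have : ((i.succ : Fin (m+2)) : ℕ) ≠ 0 := by simp [Fin.val_succ]
    by_cases h : ((i.succ : Fin (m+2)) : ℕ) = ((g k : Fin (m+2)) : ℕ)
    · rw [if_pos h, if_pos h, if_neg this]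
    · rw [if_neg h, if_neg h]
  have hM00 : M 0 0 = x + 1 + Complex.I * ω := by
    rw [hM, sub_Hmat_apply]; simp
  have hM01 : M 0 ((0 : Fin (m+1)).succ) = 1 := by
    rw [hM, sub_Hmat_apply, if_neg (by simp), if_pos (by simp)]
  have hM0j : ∀ j : Fin m, M 0 (j.succ.succ) = 0 := by
    intro j
    rw [hM, sub_Hmat_apply, if_neg (by simp), if_neg (by simp [Fin.val_succ])]
  rw [show M.det = _ from Matrix.det_succ_row_zero M, Fin.sum_univ_succ, Fin.sum_univ_succ]
  have hrest : ∑ j : Fin m, (-1 : ℂ) ^ ((j.succ.succ : Fin (m+2)) : ℕ) *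
      M 0 (j.succ.succ) * (M.submatrix Fin.succ (j.succ.succ).succAbove).det = 0 := by
    apply Finset.sum_eq_zero
    intro j _
    rw [hM0j j]; ring
  rw [hrest, hM00, hM01, hrows, hrows, Fin.succAbove_zero, Tmat_shift, det_Tmat_minor1,
    det_Tmat, det_Tmat]
  have hab : (x + 1 + Complex.I * ω) * b = (x+1)^2 + (ω:ℂ)^2 := by
    rw [hb]; linear_combination (-((ω:ℂ))^2) * Complex.I_sq
  have hQ : (Polynomial.aeval x) (Qp m ω) = ((x+1)^2 + (ω:ℂ)^2) *
      (Polynomial.aeval x) (Ep (m+2)) - (2*(x+1)) * (Polynomial.aeval x) (Ep (m+1))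
      + (Polynomial.aeval x) (Ep m) := by
    simp only [Qp, map_add, map_sub, _root_.map_mul, map_pow, map_ofNat, Polynomial.aeval_X,
      Polynomial.aeval_C, Polynomial.aeval_one, Complex.coe_algebraMap]
    try push_cast
    try ring
  rw [hQ, aeval_Ep_rec x m]
  simp only [Fin.val_zero, Fin.val_succ, pow_zero, pow_one]
  rw [hb]
  linear_combination ((ω:ℂ)^2 * ((Polynomial.aeval x) (Ep m)
    - x * (Polynomial.aeval x) (Ep (m+1)))) * Complex.I_sq

lemma Ep_eval_sin (α : ℝ) : ∀ n : ℕ, Real.sin α * (Ep n).eval (-2*Real.cos α)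
    = (-1)^n * Real.sin ((n:ℝ)*α - α) := by
  intro n
  induction n using Nat.twoStepInduction with
  | zero => simp [Ep]
  | one => simp [Ep]
  | more n ih1 ih2 =>
    have hev : (Ep (n+2)).eval (-2*Real.cos α) = (-2*Real.cos α) * (Ep (n+1)).eval
        (-2*Real.cos α) - (Ep n).eval (-2*Real.cos α) := by
      show (Polynomial.X * Ep (n+1) - Ep n).eval _ = _
      simp [Polynomial.eval_mul]
    have e2 : ((n+2:ℕ):ℝ)*α - α = ((n:ℝ)*α) + α := by push_cast; ring
    have e1 : ((n+1:ℕ):ℝ)*α - α = (n:ℝ)*α := by push_cast; ring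
    rw [hev, mul_sub, mul_comm (Real.sin α) _, mul_assoc, mul_comm _ (Real.sin α), ih2, ih1,
      e2, e1, Real.sin_add]
    have e0 : (n:ℝ)*α - α = (n:ℝ)*α - α := rfl
    rw [Real.sin_sub]
    ring

lemma Ep_eval_neg_two : ∀ n : ℕ, (Ep n).eval (-2) = (-1)^n * ((n:ℝ) - 1) := by
  intro n
  induction n using Nat.twoStepInduction with
  | zero => simp [Ep]
  | one => simp [Ep]
  | more n ih1 ih2 =>
    have hev : (Ep (n+2)).eval (-2) = (-2) * (Ep (n+1)).eval (-2) - (Ep n).eval (-2) := by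
      show (Polynomial.X * Ep (n+1) - Ep n).eval _ = _
      simp [Polynomial.eval_mul]
    rw [hev, ih1, ih2]
    push_cast
    ring

lemma Qp_zero_eval (m : ℕ) (y : ℝ) : (Qp m 0).eval y =
    (y+1)^2 * (Ep (m+2)).eval y - 2*(y+1)*(Ep (m+1)).eval y + (Ep m).eval y := by
  simp only [Qp, Polynomial.eval_add, Polynomial.eval_sub, Polynomial.eval_mul,
    Polynomial.eval_pow, Polynomial.eval_C, Polynomial.eval_X, Polynomial.eval_one,
    Polynomial.eval_ofNat]
  norm_num

/-- the unperturbed eigenvalues -/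
noncomputable def lamr (N k : ℕ) : ℝ := -2*Real.cos ((k:ℝ)*Real.pi/(N:ℝ))

lemma Qp_root (m k : ℕ) (hk : k < m+2) : (Qp m 0).eval (lamr (m+2) k) = 0 := by
  rcases Nat.eq_zero_or_pos k with rfl | hk1
  · have h0 : lamr (m+2) 0 = -2 := by simp [lamr]
    rw [h0, Qp_zero_eval, Ep_eval_neg_two, Ep_eval_neg_two, Ep_eval_neg_two]
    push_cast
    ring
  · set α : ℝ := (k:ℝ)*Real.pi/((m+2:ℕ):ℝ) with hα
    have hm2 : ((m+2:ℕ):ℝ) ≠ 0 := by positivity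
    have hαpos : 0 < α := by
      rw [hα]
      have : (0:ℝ) < (k:ℝ) := by exact_mod_cast hk1
      positivity
    have hαlt : α < Real.pi := by
      rw [hα, div_lt_iff₀ (by positivity)]
      have : (k:ℝ) < ((m+2:ℕ):ℝ) := by exact_mod_cast hk
      nlinarith [Real.pi_pos]
    have hs : 0 < Real.sin α := Real.sin_pos_of_pos_of_lt_pi hαpos hαlt
    have hNα : ((m+2:ℕ):ℝ) * α = (k:ℝ) * Real.pi := by
      rw [hα]; field_simp
    have hlam : lamr (m+2) k = -2*Real.cos α := by rw [lamr, hα]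
    have h2 := Ep_eval_sin α (m+2)
    have h1 := Ep_eval_sin α (m+1)
    have h0 := Ep_eval_sin α m
    have e2 : ((m+2:ℕ):ℝ)*α - α = (k:ℝ)*Real.pi - α := by rw [hNα]
    have e1 : ((m+1:ℕ):ℝ)*α - α = (k:ℝ)*Real.pi - 2*α := by
      push_cast at hNα ⊢; linarith
    have e0 : ((m:ℕ):ℝ)*α - α = (k:ℝ)*Real.pi - 3*α := by
      push_cast at hNα ⊢; linarith
    rw [e2, Real.sin_nat_mul_pi_sub] at h2
    rw [e1, Real.sin_nat_mul_pi_sub] at h1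
    rw [e0, Real.sin_nat_mul_pi_sub] at h0
    rw [Real.sin_two_mul] at h1
    rw [Real.sin_three_mul] at h0
    have key : Real.sin α * (Qp m 0).eval (-2*Real.cos α) = 0 := by
      rw [Qp_zero_eval]
      linear_combination ((-2*Real.cos α)+1)^2 * h2 - 2*((-2*Real.cos α)+1)*h1 + h0
        + 4*Real.sin α*(-1)^(m+k)*(Real.sin_sq_add_cos_sq α)
    rw [hlam]
    exact (mul_eq_zero.mp key).resolve_left (ne_of_gt hs)

lemma Ep_degree_le' : ∀ n : ℕ, (Ep n).degree ≤ (n : ℕ) := by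
  intro n
  match n with
  | 0 => simp [Ep]
  | (k+1) => exact le_trans (Ep_degree_le k) (by exact_mod_cast Nat.le_succ k)

lemma Qp_monic (m : ℕ) (ω : ℝ) : (Qp m ω).Monic ∧ (Qp m ω).natDegree = m+2 := by
  set lead : Polynomial ℝ := (Polynomial.X + 1)^2 * Ep (m+2) with hlead
  set rest : Polynomial ℝ := Polynomial.C (ω^2) * Ep (m+2)
    - (2*(Polynomial.X + 1)) * Ep (m+1) + Ep m with hrest
  have hsplit : Qp m ω = lead + rest := by rw [Qp, hlead, hrest]; ring
  have hX1 : (Polynomial.X + 1 : Polynomial ℝ).Monic := by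
    simpa using Polynomial.monic_X_add_C (1:ℝ)
  have hleadm : lead.Monic := (hX1.pow 2).mul (Ep_monic m).1
  have hnd1 : (Polynomial.X + 1 : Polynomial ℝ).natDegree = 1 := by
    rw [show (1 : Polynomial ℝ) = Polynomial.C 1 from Polynomial.C_1.symm]
    exact Polynomial.natDegree_X_add_C 1
  have hleadd : lead.natDegree = m + 2 := by
    rw [hlead, Polynomial.natDegree_mul (hX1.pow 2).ne_zero (Ep_monic m).1.ne_zero,
      hX1.natDegree_pow, hnd1, (Ep_monic m).2]
    ring
  have hrestd : rest.degree < (m + 2 : ℕ) := by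
    rw [hrest]
    apply lt_of_le_of_lt (Polynomial.degree_add_le _ _)
    apply max_lt
    · apply lt_of_le_of_lt (Polynomial.degree_sub_le _ _)
      apply max_lt
      · apply lt_of_le_of_lt (Polynomial.degree_mul_le _ _)
        have h1 : (Polynomial.C (ω^2)).degree ≤ 0 := Polynomial.degree_C_le
        have h2 : (Ep (m+2)).degree ≤ (m : ℕ) := by
          rw [Polynomial.degree_eq_natDegree (Ep_monic m).1.ne_zero, (Ep_monic m).2]
        calc (Polynomial.C (ω^2)).degree + (Ep (m+2)).degree ≤ 0 + (m:ℕ) := add_le_add h1 h2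
          _ < ((m+2 : ℕ) : WithBot ℕ) := by
            rw [zero_add]; exact_mod_cast by omega
      · apply lt_of_le_of_lt (Polynomial.degree_mul_le _ _)
        have h1 : (2*(Polynomial.X + 1) : Polynomial ℝ).degree ≤ 1 := by
          apply le_trans (Polynomial.degree_mul_le _ _)
          have : (2 : Polynomial ℝ).degree ≤ 0 := by
            rw [show (2 : Polynomial ℝ) = Polynomial.C 2 by rw [map_ofNat]]
            exact Polynomial.degree_C_le
          have h2 : (Polynomial.X + 1 : Polynomial ℝ).degree ≤ 1 := by
            apply le_trans (Polynomial.degree_add_le _ _)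
            simp [Polynomial.degree_X, Polynomial.degree_one]
          calc (2 : Polynomial ℝ).degree + (Polynomial.X + 1 : Polynomial ℝ).degree
              ≤ 0 + 1 := add_le_add this h2
            _ = 1 := by rw [zero_add]
        have h2 : (Ep (m+1)).degree ≤ (m : ℕ) := Ep_degree_le m
        calc (2*(Polynomial.X + 1) : Polynomial ℝ).degree + (Ep (m+1)).degree
            ≤ 1 + (m:ℕ) := add_le_add h1 h2
          _ = ((1 + m : ℕ) : WithBot ℕ) := by
            rw [Nat.cast_add, Nat.cast_one]
          _ < ((m+2 : ℕ) : WithBot ℕ) := by exact_mod_cast by omega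
    · exact lt_of_le_of_lt (Ep_degree_le' m) (by exact_mod_cast by omega)
  have hdlt : rest.degree < lead.degree := by
    rw [Polynomial.degree_eq_natDegree hleadm.ne_zero, hleadd]
    exact hrestd
  constructor
  · rw [hsplit]; exact hleadm.add_of_left hdlt
  · rw [hsplit, Polynomial.natDegree_add_eq_left_of_degree_lt hdlt, hleadd]

lemma eq_prod_of_roots (p : Polynomial ℝ) (n : ℕ) (hm : p.Monic) (hd : p.natDegree = n)
    (r : Fin n → ℝ) (hinj : Function.Injective r) (hr : ∀ i, p.eval (r i) = 0) :
    p = ∏ i : Fin n, (Polynomial.X - Polynomial.C (r i)) := by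
  set q : Polynomial ℝ := ∏ i : Fin n, (Polynomial.X - Polynomial.C (r i)) with hq
  have hqm : q.Monic := Polynomial.monic_prod_of_monic _ _ (fun i _ => Polynomial.monic_X_sub_C _)
  have hqd : q.natDegree = n := by
    rw [hq, Polynomial.natDegree_prod_of_monic _ _ (fun i _ => Polynomial.monic_X_sub_C _)]
    simp
  have hqr : ∀ i, q.eval (r i) = 0 := by
    intro i
    rw [hq, Polynomial.eval_prod]
    apply Finset.prod_eq_zero (Finset.mem_univ i)
    simp
  by_cases hpq : p = q
  · exact hpq
  have hdq : p.degree = q.degree := by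
    rw [Polynomial.degree_eq_natDegree hm.ne_zero, Polynomial.degree_eq_natDegree hqm.ne_zero,
      hd, hqd]
  have hlc : p.leadingCoeff = q.leadingCoeff := by rw [hm.leadingCoeff, hqm.leadingCoeff]
  have hdeg : (p - q).degree < (n : ℕ) := by
    have := Polynomial.degree_sub_lt hdq hm.ne_zero hlc
    rw [Polynomial.degree_eq_natDegree hm.ne_zero, hd] at this
    exact this
  have hz : p - q = 0 := by
    apply Polynomial.eq_zero_of_natDegree_lt_card_of_eval_eq_zero (p - q) hinj
    · intro i
      simp [hr i, hqr i]
    · rw [Fintype.card_fin]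
      by_cases h0 : p - q = 0
      · exact absurd (sub_eq_zero.mp h0) hpq
      · exact Polynomial.natDegree_lt_iff_degree_lt h0 |>.mpr (by exact_mod_cast hdeg)
  exact sub_eq_zero.mp hz

lemma prod_neg_pos (s : Finset ℕ) (f : ℕ → ℝ) (h : ∀ k ∈ s, f k < 0) :
    0 < (-1 : ℝ)^s.card * ∏ k ∈ s, f k := by
  induction s using Finset.cons_induction with
  | empty => simp
  | cons a s ha ih =>
    rw [Finset.prod_cons, Finset.card_cons]
    have h1 : f a < 0 := h a (Finset.mem_cons_self a s)
    have h2 : 0 < (-1 : ℝ)^s.card * ∏ k ∈ s, f k :=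
      ih (fun k hk => h k (Finset.mem_cons_of_mem hk))
    have : (-1:ℝ)^(s.card+1) * (f a * ∏ k ∈ s, f k)
        = (-f a) * ((-1:ℝ)^s.card * ∏ k ∈ s, f k) := by ring
    rw [this]
    exact mul_pos (by linarith) h2

lemma lamr_lt (N k l : ℕ) (hN : 0 < N) (hkl : k < l) (hl : l ≤ N) :
    lamr N k < lamr N l := by
  have hNpos : (0:ℝ) < (N:ℝ) := by exact_mod_cast hN
  have hcos : Real.cos ((l:ℝ)*Real.pi/(N:ℝ)) < Real.cos ((k:ℝ)*Real.pi/(N:ℝ)) := by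
    apply Real.cos_lt_cos_of_nonneg_of_le_pi
    · positivity
    · rw [div_le_iff₀ hNpos]
      have : (l:ℝ) ≤ (N:ℝ) := by exact_mod_cast hl
      nlinarith [Real.pi_pos]
    · have h1 : (k:ℝ) < (l:ℝ) := by exact_mod_cast hkl
      apply div_lt_div_of_pos_right ?_ hNpos
      nlinarith [Real.pi_pos]
  rw [lamr, lamr]
  linarith

lemma Qp_eval_split (m : ℕ) (ω : ℝ) (t : ℝ) :
    (Qp m ω).eval t = (Qp m 0).eval t + ω^2 * (Ep (m+2)).eval t := by
  simp only [Qp, Polynomial.eval_add, Polynomial.eval_sub, Polynomial.eval_mul,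
    Polynomial.eval_pow, Polynomial.eval_C, Polynomial.eval_X, Polynomial.eval_one,
    Polynomial.eval_ofNat]
  ring_nf

/-- For every `N ≥ 2` there exists `δ > 0` such that for all `ω` with `|ω| < δ` the matrix
`H^{(N)}(ω)` has `N` pairwise distinct real eigenvalues: there is a set of `N` distinct real
numbers such that `λ ∈ ℂ` is an eigenvalue of `H^{(N)}(ω)` iff `λ` belongs to this set. -/
theorem stmt13 (N : ℕ) (hN : 2 ≤ N) :
    ∃ δ > (0 : ℝ), ∀ ω : ℝ, |ω| < δ →
      ∃ S : Finset ℝ, S.card = N ∧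
        ∀ lam : ℂ, (∃ v : Fin N → ℂ, v ≠ 0 ∧ Hmat N ω *ᵥ v = lam • v) ↔
          ∃ r ∈ S, (r : ℂ) = lam := by
  obtain ⟨m, rfl⟩ : ∃ m, N = m + 2 := ⟨N - 2, by omega⟩
  clear hN
  set lv : ℕ → ℝ := fun k => lamr (m+2) k with hlv
  have hlt : ∀ k l, k < l → l ≤ m+2 → lv k < lv l :=
    fun k l h h2 => lamr_lt (m+2) k l (by omega) h h2
  have hinj : Function.Injective (fun i : Fin (m+2) => lv (i:ℕ)) := by
    intro i j hij
    by_contra hne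
    have hne' : (i:ℕ) ≠ (j:ℕ) := fun h => hne (Fin.val_inj.mp h)
    rcases Nat.lt_or_ge (i:ℕ) (j:ℕ) with h | h
    · exact absurd hij (ne_of_lt (hlt _ _ h (by omega)))
    · exact absurd hij.symm (ne_of_lt (hlt _ _ (by omega) (by omega)))
  have hfact : Qp m 0 = ∏ i : Fin (m+2), (Polynomial.X - Polynomial.C (lv (i:ℕ))) :=
    eq_prod_of_roots _ _ (Qp_monic m 0).1 (Qp_monic m 0).2 _ hinj
      (fun i => Qp_root m (i:ℕ) i.isLt)
  set mid : ℕ → ℝ := fun i => if i = 0 then lv 0 - 1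
    else if i ≤ m+1 then (lv (i-1) + lv i)/2 else lv (m+1) + 1 with hmid
  have hmidlam : ∀ i k, i ≤ m+2 → k < m+2 →
      ((k < i → lv k < mid i) ∧ (i ≤ k → mid i < lv k)) := by
    intro i k hi hk
    constructor
    · intro hki
      have h0 : i ≠ 0 := by omega
      by_cases h1 : i ≤ m+1
      · have hmeq : mid i = (lv (i-1) + lv i)/2 := by
          simp only [hmid, if_neg h0, if_pos h1]
        have h2 : lv k ≤ lv (i-1) := by
          rcases Nat.lt_or_ge k (i-1) with h|h
          · exact (hlt k (i-1) h (by omega)).le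
          · have : k = i-1 := by omega
            rw [this]
        have h3 : lv (i-1) < lv i := hlt (i-1) i (by omega) (by omega)
        rw [hmeq]; linarith
      · have hmeq : mid i = lv (m+1) + 1 := by
          simp only [hmid, if_neg h0, if_neg h1]
        have h2 : lv k ≤ lv (m+1) := by
          rcases Nat.lt_or_ge k (m+1) with h|h
          · exact (hlt k (m+1) h (by omega)).le
          · have : k = m+1 := by omega
            rw [this]
        rw [hmeq]; linarith
    · intro hik
      by_cases h0 : i = 0
      · have hmeq : mid i = lv 0 - 1 := by simp only [hmid, h0, if_pos rfl]
        have h2 : lv 0 ≤ lv k := by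
          rcases Nat.lt_or_ge 0 k with h|h
          · exact (hlt 0 k h (by omega)).le
          · have : k = 0 := by omega
            rw [this]
        rw [hmeq]; linarith
      · have h1 : i ≤ m+1 := by omega
        have hmeq : mid i = (lv (i-1) + lv i)/2 := by
          simp only [hmid, if_neg h0, if_pos h1]
        have h2 : lv i ≤ lv k := by
          rcases Nat.lt_or_ge i k with h|h
          · exact (hlt i k h (by omega)).le
          · have : k = i := by omega
            rw [this]
        have h3 : lv (i-1) < lv i := hlt (i-1) i (by omega) (by omega)
        rw [hmeq]; linarith
  have hmidlt : ∀ i j, i < j → j ≤ m+2 → mid i < mid j := by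
    intro i j hij hj
    have h1 : mid i < lv i := (hmidlam i i (by omega) (by omega)).2 le_rfl
    have h2 : lv i < mid j := (hmidlam j i hj (by omega)).1 hij
    linarith
  have hsign0 : ∀ i ≤ m+2, 0 < (-1:ℝ)^(m+2-i) * (Qp m 0).eval (mid i) := by
    intro i hi
    rw [hfact, Polynomial.eval_prod]
    simp only [Polynomial.eval_sub, Polynomial.eval_X, Polynomial.eval_C]
    rw [Fin.prod_univ_eq_prod_range (fun k => mid i - lv k) (m+2)]
    rw [Finset.range_eq_Ico, ← Finset.prod_Ico_consecutive _ (Nat.zero_le i) hi]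
    have hpos1 : 0 < ∏ k ∈ Finset.Ico 0 i, (mid i - lv k) := by
      apply Finset.prod_pos
      intro k hk
      have hk' := Finset.mem_Ico.mp hk
      have := (hmidlam i k hi (by omega)).1 hk'.2
      linarith
    have hpos2 : 0 < (-1:ℝ)^(m+2-i) * ∏ k ∈ Finset.Ico i (m+2), (mid i - lv k) := by
      have := prod_neg_pos (Finset.Ico i (m+2)) (fun k => mid i - lv k) (by
        intro k hk
        have hk' := Finset.mem_Ico.mp hk
        have := (hmidlam i k hi hk'.2).2 hk'.1
        show mid i - lv k < 0
        linarith)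
      rwa [Nat.card_Ico] at this
    have heq : (-1:ℝ)^(m+2-i) * ((∏ k ∈ Finset.Ico 0 i, (mid i - lv k)) *
        ∏ k ∈ Finset.Ico i (m+2), (mid i - lv k))
        = (∏ k ∈ Finset.Ico 0 i, (mid i - lv k)) *
          ((-1:ℝ)^(m+2-i) * ∏ k ∈ Finset.Ico i (m+2), (mid i - lv k)) := by ring
    rw [heq]
    exact mul_pos hpos1 hpos2
  -- choose delta
  have hne3 : (Finset.range (m+3)).Nonempty := ⟨0, by simp⟩
  set B : ℝ := 1 + (Finset.range (m+3)).sup' hne3 (fun i => |(Ep (m+2)).eval (mid i)|) with hB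
  have hBpos : 0 < B := by
    have h0 : (0:ℝ) ≤ |(Ep (m+2)).eval (mid 0)| := abs_nonneg _
    have h1 : |(Ep (m+2)).eval (mid 0)| ≤ (Finset.range (m+3)).sup' hne3
        (fun i => |(Ep (m+2)).eval (mid i)|) :=
      Finset.le_sup' (fun i => |(Ep (m+2)).eval (mid i)|) (Finset.mem_range.mpr (by omega))
    rw [hB]; linarith
  have hBle : ∀ i ≤ m+2, |(Ep (m+2)).eval (mid i)| ≤ B := by
    intro i hi
    have h1 : |(Ep (m+2)).eval (mid i)| ≤ (Finset.range (m+3)).sup' hne3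
        (fun i => |(Ep (m+2)).eval (mid i)|) :=
      Finset.le_sup' (fun i => |(Ep (m+2)).eval (mid i)|) (Finset.mem_range.mpr (by omega))
    rw [hB]; linarith
  set c : ℝ := (Finset.range (m+3)).inf' hne3
    (fun i => (-1:ℝ)^(m+2-i) * (Qp m 0).eval (mid i)) with hc
  have hcpos : 0 < c := by
    rw [hc, Finset.lt_inf'_iff]
    intro i hi
    exact hsign0 i (by have := Finset.mem_range.mp hi; omega)
  have hcle : ∀ i ≤ m+2, c ≤ (-1:ℝ)^(m+2-i) * (Qp m 0).eval (mid i) := by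
    intro i hi
    exact Finset.inf'_le (fun i => (-1:ℝ)^(m+2-i) * (Qp m 0).eval (mid i))
      (Finset.mem_range.mpr (by omega))
  refine ⟨Real.sqrt (c/B), Real.sqrt_pos.mpr (div_pos hcpos hBpos), ?_⟩
  intro ω hω
  have hω2 : ω^2 < c/B := by
    have h1 : |ω| * |ω| < Real.sqrt (c/B) * Real.sqrt (c/B) :=
      mul_lt_mul'' hω hω (abs_nonneg _) (abs_nonneg _)
    rw [Real.mul_self_sqrt (le_of_lt (div_pos hcpos hBpos)), abs_mul_abs_self] at h1
    nlinarith
  have hsign : ∀ i ≤ m+2, 0 < (-1:ℝ)^(m+2-i) * (Qp m ω).eval (mid i) := by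
    intro i hi
    rw [Qp_eval_split, mul_add]
    have h2 : |(-1:ℝ)^(m+2-i) * (ω^2 * (Ep (m+2)).eval (mid i))| ≤ ω^2 * B := by
      rw [abs_mul, abs_pow, abs_neg, abs_one, one_pow, one_mul, abs_mul,
        abs_of_nonneg (sq_nonneg ω)]
      exact mul_le_mul_of_nonneg_left (hBle i hi) (sq_nonneg ω)
    have h4 := hcle i hi
    have h5 : ω^2 * B < c := by
      have := mul_lt_mul_of_pos_right hω2 hBpos
      rwa [div_mul_cancel₀ c hBpos.ne'] at this
    nlinarith [neg_abs_le ((-1:ℝ)^(m+2-i) * (ω^2 * (Ep (m+2)).eval (mid i)))]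
  -- roots via IVT
  have hroot : ∀ i : Fin (m+2), ∃ t, t ∈ Set.Ioo (mid (i:ℕ)) (mid ((i:ℕ)+1))
      ∧ (Qp m ω).eval t = 0 := by
    intro i
    have hi1 : (i:ℕ) ≤ m+2 := by omega
    have hi2 : (i:ℕ)+1 ≤ m+2 := by omega
    have ha := hsign (i:ℕ) hi1
    have hb := hsign ((i:ℕ)+1) hi2
    have hee : m+2-(i:ℕ) = (m+1-(i:ℕ))+1 := by omega
    have hmm : m+2-((i:ℕ)+1) = m+1-(i:ℕ) := by omega
    rw [hee] at ha
    rw [hmm] at hb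
    set e : ℕ := m+1-(i:ℕ)
    have hga : (-1:ℝ)^e * (Qp m ω).eval (mid (i:ℕ)) < 0 := by
      have hred : (-1:ℝ)^(e+1) = -((-1:ℝ)^e) := by ring
      rw [hred] at ha; linarith
    have hcont : ContinuousOn (fun t => (-1:ℝ)^e * (Qp m ω).eval t)
        (Set.Icc (mid (i:ℕ)) (mid ((i:ℕ)+1))) :=
      (continuous_const.mul (Qp m ω).continuous).continuousOn
    have hmlt : mid (i:ℕ) ≤ mid ((i:ℕ)+1) := (hmidlt _ _ (by omega) hi2).le
    have h0mem : (0:ℝ) ∈ Set.Ioo ((-1:ℝ)^e * (Qp m ω).eval (mid (i:ℕ)))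
        ((-1:ℝ)^e * (Qp m ω).eval (mid ((i:ℕ)+1))) := ⟨hga, hb⟩
    obtain ⟨t, ht, hgt⟩ := intermediate_value_Ioo hmlt hcont h0mem
    refine ⟨t, ht, ?_⟩
    have hne : ((-1:ℝ)^e) ≠ 0 := pow_ne_zero _ (by norm_num)
    exact (mul_eq_zero.mp hgt).resolve_left hne
  choose r hrIoo hrz using hroot
  have hrmono : ∀ i j : Fin (m+2), (i:ℕ) < (j:ℕ) → r i < r j := by
    intro i j hij
    have h1 : r i < mid ((i:ℕ)+1) := (hrIoo i).2
    have h2 : mid (j:ℕ) < r j := (hrIoo j).1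
    have h3 : mid ((i:ℕ)+1) ≤ mid (j:ℕ) := by
      rcases Nat.lt_or_ge ((i:ℕ)+1) (j:ℕ) with h|h
      · exact (hmidlt _ _ h (by omega)).le
      · have : (i:ℕ)+1 = (j:ℕ) := by omega
        rw [this]
    linarith
  have hrinj : Function.Injective r := by
    intro i j hij
    by_contra hne
    have hne' : (i:ℕ) ≠ (j:ℕ) := fun h => hne (Fin.val_inj.mp h)
    rcases Nat.lt_or_ge (i:ℕ) (j:ℕ) with h | h
    · exact absurd hij (ne_of_lt (hrmono _ _ h))
    · exact absurd hij.symm (ne_of_lt (hrmono _ _ (by omega)))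
  have hfact2 : Qp m ω = ∏ i : Fin (m+2), (Polynomial.X - Polynomial.C (r i)) :=
    eq_prod_of_roots _ _ (Qp_monic m ω).1 (Qp_monic m ω).2 r hrinj hrz
  refine ⟨Finset.image r Finset.univ, ?_, ?_⟩
  · rw [Finset.card_image_of_injective _ hrinj, Finset.card_univ, Fintype.card_fin]
  intro z
  have haev : ∀ w : ℂ, (Polynomial.aeval w) (Qp m ω)
      = ∏ i : Fin (m+2), (w - ((r i : ℝ) : ℂ)) := by
    intro w
    rw [hfact2, map_prod]
    simp only [map_sub, Polynomial.aeval_X, Polynomial.aeval_C, Complex.coe_algebraMap]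
  constructor
  · rintro ⟨v, hv, hHv⟩
    have hker : (Hmat (m+2) ω - z • 1) *ᵥ v = 0 := by
      rw [Matrix.sub_mulVec, Matrix.smul_mulVec, Matrix.one_mulVec, hHv, sub_self]
    have hdet : (Hmat (m+2) ω - z • 1).det = 0 :=
      Matrix.exists_mulVec_eq_zero_iff.mp ⟨v, hv, hker⟩
    have hdet2 : (z • (1 : Matrix (Fin (m+2)) (Fin (m+2)) ℂ) - Hmat (m+2) ω).det = 0 := by
      rw [show Hmat (m+2) ω - z • 1 = -(z • 1 - Hmat (m+2) ω) from (neg_sub _ _).symm,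
        Matrix.det_neg] at hdet
      have hne : ((-1:ℂ)^(Fintype.card (Fin (m+2)))) ≠ 0 := pow_ne_zero _ (by norm_num)
      exact (mul_eq_zero.mp hdet).resolve_left hne
    rw [det_sub_Hmat, haev] at hdet2
    obtain ⟨i, _, hi⟩ := Finset.prod_eq_zero_iff.mp hdet2
    exact ⟨r i, Finset.mem_image_of_mem r (Finset.mem_univ i), (sub_eq_zero.mp hi).symm⟩
  · rintro ⟨rr, hrr, rfl⟩
    obtain ⟨i, _, rfl⟩ := Finset.mem_image.mp hrr
    have hdet2 : (((r i : ℝ) : ℂ) • (1 : Matrix (Fin (m+2)) (Fin (m+2)) ℂ)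
        - Hmat (m+2) ω).det = 0 := by
      rw [det_sub_Hmat, haev]
      exact Finset.prod_eq_zero (Finset.mem_univ i) (sub_self _)
    have hdet : (Hmat (m+2) ω - ((r i : ℝ) : ℂ) • 1).det = 0 := by
      rw [show Hmat (m+2) ω - ((r i : ℝ) : ℂ) • 1
          = -(((r i : ℝ) : ℂ) • 1 - Hmat (m+2) ω) from (neg_sub _ _).symm,
        Matrix.det_neg, hdet2, mul_zero]
    obtain ⟨v, hv, hker⟩ := Matrix.exists_mulVec_eq_zero_iff.mpr hdet
    refine ⟨v, hv, ?_⟩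
    rw [Matrix.sub_mulVec, Matrix.smul_mulVec, Matrix.one_mulVec, sub_eq_zero] at hker
    exact hker
end

section
/- Let N ≥ 2 be an integer and let ξ, ζ ∈ ℝ with (1−ζ)² + ξ² ≠ 0, and set z = 1/(1 − ζ − iξ). Then P_{N,z}(1) = 0 if and only if ξ² + ζ² = 2ζ/(N+1); in particular, if P_{N,z}(1) = 0 then 0 ≤ ζ ≤ 2/(N+1). -/
lemma chebU_one : ∀ n, chebU n 1 = (n : ℂ) + 1
  | 0 => by simp [chebU]
  | 1 => by norm_num [chebU]
  | n + 2 => by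
    rw [chebU, chebU_one (n + 1), chebU_one n]
    push_cast; ring

/-- With `z = 1/(1 − ζ − iξ)`: `P_{N,z}(1) = 0` iff `ξ² + ζ² = 2ζ/(N+1)`;
in particular `P_{N,z}(1) = 0` forces `0 ≤ ζ ≤ 2/(N+1)`. -/
theorem stmt15 (N : ℕ) (hN : 2 ≤ N) (ξ ζ : ℝ) (h : (1 - ζ) ^ 2 + ξ ^ 2 ≠ 0) :
    (Psec N (1 / (1 - (ζ : ℂ) - Complex.I * ξ)) 1 = 0 ↔
      ξ ^ 2 + ζ ^ 2 = 2 * ζ / ((N : ℝ) + 1)) ∧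
    (Psec N (1 / (1 - (ζ : ℂ) - Complex.I * ξ)) 1 = 0 →
      0 ≤ ζ ∧ ζ ≤ 2 / ((N : ℝ) + 1)) := by
  obtain ⟨M, rfl⟩ : ∃ M, N = M + 2 := ⟨N - 2, by omega⟩
  set r : ℝ := (1 - ζ) ^ 2 + ξ ^ 2 with hr
  have hr0 : 0 < r := lt_of_le_of_ne (by positivity) (Ne.symm h)
  set w : ℂ := 1 - (ζ : ℂ) - Complex.I * ξ with hw
  have hnw : Complex.normSq w = r := by
    simp [hw, Complex.normSq_apply, hr]
    ring
  have hzz : (1 / w) * starRingEnd ℂ (1 / w) = ((1 / r : ℝ) : ℂ) := by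
    rw [Complex.mul_conj]
    rw [show Complex.normSq (1 / w) = 1 / r by
      simp [map_div₀, hnw]]
  have hre : (1 / w).re = (1 - ζ) / r := by
    rw [one_div, Complex.inv_re, hnw]
    simp [hw]
  have hsum : (1 / w) + starRingEnd ℂ (1 / w) = ((2 * (1 - ζ) / r : ℝ) : ℂ) := by
    rw [Complex.add_conj, hre]
    push_cast; ring
  have hP : Psec (M + 2) (1 / w) 1 =
      ((( (M : ℝ) + 1) - 2 * (1 - ζ) * ((M : ℝ) + 2) + r * ((M : ℝ) + 3)) / r : ℝ) := by
    have e2 : (M + 2 : ℕ) - 2 = M := by omega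
    have e1 : (M + 2 : ℕ) - 1 = M + 1 := by omega
    rw [Psec, e2, e1, chebU_one, chebU_one, chebU_one, hzz, hsum]
    have hrC : ((r : ℝ) : ℂ) ≠ 0 := by
      rw [Complex.ofReal_ne_zero]; exact h
    rw [Complex.ofReal_div, Complex.ofReal_div, Complex.ofReal_div, eq_div_iff hrC]
    push_cast
    field_simp
    ring
  have key : Psec (M + 2) (1 / w) 1 = 0 ↔
      ξ ^ 2 + ζ ^ 2 = 2 * ζ / ((M : ℝ) + 2 + 1) := by
    rw [hP, Complex.ofReal_eq_zero, div_eq_zero_iff]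
    have hM3 : (0:ℝ) < (M : ℝ) + 3 := by positivity
    constructor
    · rintro (he | he)
      · rw [eq_div_iff (by positivity)]
        nlinarith [he]
      · exact absurd he (ne_of_gt hr0)
    · intro he
      left
      rw [eq_div_iff (by positivity)] at he
      nlinarith [he]
  refine ⟨by push_cast at key ⊢; exact key, fun hp => ?_⟩
  have he := key.mp hp
  rw [eq_div_iff (by positivity)] at he
  have hζ : 0 ≤ ζ := by nlinarith [sq_nonneg ξ, sq_nonneg ζ]
  refine ⟨hζ, ?_⟩
  have hM : (0:ℝ) < ((M + 2 : ℕ) : ℝ) + 1 := by positivity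
  rw [le_div_iff₀ hM]
  push_cast
  rcases eq_or_lt_of_le hζ with hz0 | hz0
  · nlinarith [hz0]
  · nlinarith [sq_nonneg ξ, hz0, mul_nonneg (sq_nonneg ξ) (by positivity : (0:ℝ) ≤ (M:ℝ) + 3)]
end

section
/- Let N ≥ 2 be an integer and let ξ, ζ ∈ ℝ with (1−ζ)² + ξ² ≠ 0, and set z = 1/(1 − ζ − iξ). If P_{N,z}(−1) = 0, then 2N/(N+1) ≤ √(ξ² + ζ²) ≤ 2. In particular, y = −1 is not a root of P_{N,z} whenever ξ² + ζ² < (2N/(N+1))². -/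
lemma chebU_neg_one : ∀ n : ℕ, chebU n (-1) = (-1) ^ n * (n + 1)
  | 0 => by simp [chebU]
  | 1 => by norm_num [chebU]
  | n + 2 => by
      rw [chebU, chebU_neg_one (n + 1), chebU_neg_one n]
      push_cast
      ring

/-- With `z = 1/(1 − ζ − iξ)`: if `P_{N,z}(−1) = 0` then
`2N/(N+1) ≤ √(ξ² + ζ²) ≤ 2`; in particular `y = −1` is not a root of `P_{N,z}` whenever
`ξ² + ζ² < (2N/(N+1))²`. -/
theorem stmt16 (N : ℕ) (hN : 2 ≤ N) (ξ ζ : ℝ) (h : (1 - ζ) ^ 2 + ξ ^ 2 ≠ 0) :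
    (Psec N (1 / (1 - (ζ : ℂ) - Complex.I * ξ)) (-1) = 0 →
      2 * (N : ℝ) / ((N : ℝ) + 1) ≤ Real.sqrt (ξ ^ 2 + ζ ^ 2) ∧
        Real.sqrt (ξ ^ 2 + ζ ^ 2) ≤ 2) ∧
    (ξ ^ 2 + ζ ^ 2 < (2 * (N : ℝ) / ((N : ℝ) + 1)) ^ 2 →
      Psec N (1 / (1 - (ζ : ℂ) - Complex.I * ξ)) (-1) ≠ 0) := by
  obtain ⟨m, rfl⟩ : ∃ m, N = m + 2 := ⟨N - 2, by omega⟩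
  set w : ℂ := 1 - (ζ : ℂ) - Complex.I * ξ with hwdef
  have hconjw : starRingEnd ℂ w = 1 - (ζ : ℂ) + Complex.I * ξ := by
    simp [hwdef, map_sub, map_mul, Complex.conj_I, Complex.conj_ofReal]
  have hww : w * starRingEnd ℂ w = (((1 - ζ) ^ 2 + ξ ^ 2 : ℝ) : ℂ) := by
    rw [hconjw, hwdef]
    push_cast
    linear_combination (-(ξ : ℂ) ^ 2) * Complex.I_sq
  have hDc : (((1 - ζ) ^ 2 + ξ ^ 2 : ℝ) : ℂ) ≠ 0 := Complex.ofReal_ne_zero.mpr h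
  have hw0 : w ≠ 0 := by
    intro h0; apply hDc; rw [← hww, h0, zero_mul]
  have hcw0 : starRingEnd ℂ w ≠ 0 := by
    intro h0; apply hw0
    have := congrArg (starRingEnd ℂ) h0
    simpa using this
  have h1 : (1 / w) * starRingEnd ℂ (1 / w) = ((1 / ((1 - ζ) ^ 2 + ξ ^ 2) : ℝ) : ℂ) := by
    rw [map_div₀, map_one, div_mul_div_comm, one_mul, hww]
    push_cast; ring
  have h2 : (1 / w) + starRingEnd ℂ (1 / w)
      = ((2 * (1 - ζ) / ((1 - ζ) ^ 2 + ξ ^ 2) : ℝ) : ℂ) := by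
    rw [map_div₀, map_one, div_add_div _ _ hw0 hcw0, hww]
    have hnum : 1 * starRingEnd ℂ w + w * 1 = ((2 * (1 - ζ) : ℝ) : ℂ) := by
      rw [hconjw, hwdef]; push_cast; ring
    rw [hnum]
    push_cast; ring
  have hP : Psec (m + 2) (1 / w) (-1)
      = ((((-1 : ℝ)) ^ m * (((m : ℝ) + 1) + 2 * (1 - ζ) * ((m : ℝ) + 2)
          + ((m : ℝ) + 3) * ((1 - ζ) ^ 2 + ξ ^ 2)) / ((1 - ζ) ^ 2 + ξ ^ 2) : ℝ) : ℂ) := by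
    unfold Psec
    rw [show m + 2 - 2 = m from rfl, show m + 2 - 1 = m + 1 from rfl,
      chebU_neg_one, chebU_neg_one, chebU_neg_one, h1, h2]
    have hD' : ((1 : ℂ) - ζ) ^ 2 + (ξ : ℂ) ^ 2 ≠ 0 := by
      have := hDc; push_cast at this; convert this using 2 <;> push_cast <;> ring
    push_cast
    field_simp
    ring
  set E : ℝ := ((m : ℝ) + 1) + 2 * (1 - ζ) * ((m : ℝ) + 2)
      + ((m : ℝ) + 3) * ((1 - ζ) ^ 2 + ξ ^ 2) with hEdef
  have hm0 : ((-1 : ℝ)) ^ m ≠ 0 := pow_ne_zero _ (by norm_num)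
  have hiff : Psec (m + 2) (1 / w) (-1) = 0 ↔ E = 0 := by
    rw [hP, Complex.ofReal_eq_zero, div_eq_zero_iff, mul_eq_zero]
    constructor
    · rintro ((h1 | h2) | h3)
      · exact absurd h1 hm0
      · exact h2
      · exact absurd h3 h
    · intro hE; exact Or.inl (Or.inr hE)
  set s : ℝ := Real.sqrt (ξ ^ 2 + ζ ^ 2) with hsdef
  have hs0 : 0 ≤ s := Real.sqrt_nonneg _
  have hs2 : s ^ 2 = ξ ^ 2 + ζ ^ 2 := Real.sq_sqrt (by positivity)
  have main : Psec (m + 2) (1 / w) (-1) = 0 →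
      2 * ((m + 2 : ℕ) : ℝ) / (((m + 2 : ℕ) : ℝ) + 1) ≤ s ∧ s ≤ 2 := by
    intro hz
    have hE : E = 0 := hiff.mp hz
    have hζs : ζ ≤ s := by nlinarith [hs2, hs0, sq_nonneg ξ, sq_nonneg (s - ζ), sq_nonneg (s + ζ)]
    have hQ : ((m : ℝ) + 3) * s ^ 2 - (4 * (m : ℝ) + 10) * s + (4 * (m : ℝ) + 8) ≤ 0 := by
      nlinarith [hE, hs2, hζs]
    have hsle : s ≤ 2 := by
      nlinarith [hQ, hs0, sq_nonneg (s - 2), mul_nonneg (Nat.cast_nonneg m : (0:ℝ) ≤ m) hs0,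
        mul_nonneg (mul_nonneg (Nat.cast_nonneg m : (0:ℝ) ≤ m) hs0) hs0]
    refine ⟨?_, hsle⟩
    rw [div_le_iff₀ (by positivity)]
    push_cast
    nlinarith [hQ, hsle, hs0, mul_nonneg (Nat.cast_nonneg m : (0:ℝ) ≤ m) (sub_nonneg.mpr hsle)]
  constructor
  · exact main
  · intro hlt hz
    obtain ⟨hl, _⟩ := main hz
    have hc0 : 0 ≤ 2 * (((m + 2 : ℕ)) : ℝ) / (((m + 2 : ℕ) : ℝ) + 1) := by positivity
    nlinarith [hs2, hs0, hl, hlt]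
end

section
/- For every ξ ∈ ℝ, the 3×3 complex matrix Θ with rows (1, −iξ/(1+ξ²), (−ξ² − iξ)/(1+ξ²)²), (iξ/(1+ξ²), 1, −iξ/(1+ξ²)), ((−ξ² + iξ)/(1+ξ²)², iξ/(1+ξ²), 1) is Hermitian and positive definite. -/
/-!
Gaussian elimination gives `Θ = Lᴴ D L` with `L` unit upper triangular and
`D = diag(1, e/d², (e² - ξ²)/(e d²))`, where `d = 1 + ξ²` and `e = 1 + ξ² + ξ⁴`.
All pivots are positive because `|ξ| < e`, and a congruence of a positive diagonal matrix by an
invertible matrix is positive definite (hence Hermitian).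
-/

open Matrix
open scoped ComplexOrder

theorem Matrix.PosDef.conjTranspose_mul_diagonal_mul_of_isUpperTriangular
    {n R : Type*} [Fintype n] [LinearOrder n] [CommRing R] [PartialOrder R] [StarRing R]
    [StarOrderedRing R] [NoZeroDivisors R] {L : Matrix n n R} (hL : L.IsUpperTriangular)
    (hL1 : ∀ i, L i i = 1) {p : n → R} (hp : ∀ i, 0 < p i) :
    (Lᴴ * diagonal p * L).PosDef := by
  nontriviality R
  exact (PosDef.diagonal hp).conjTranspose_mul_mul_same <|
    mulVec_injective_of_det_ne_zero <| by simp [det_of_isUpperTriangular hL, hL1]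

namespace Theta

noncomputable section

def theta (ξ : ℝ) : Matrix (Fin 3) (Fin 3) ℂ :=
  !![1, -Complex.I * ξ / (1 + (ξ : ℂ) ^ 2),
       (-(ξ : ℂ) ^ 2 - Complex.I * ξ) / (1 + (ξ : ℂ) ^ 2) ^ 2;
     Complex.I * ξ / (1 + (ξ : ℂ) ^ 2), 1, -Complex.I * ξ / (1 + (ξ : ℂ) ^ 2);
     (-(ξ : ℂ) ^ 2 + Complex.I * ξ) / (1 + (ξ : ℂ) ^ 2) ^ 2,
       Complex.I * ξ / (1 + (ξ : ℂ) ^ 2), 1]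

def unitFactor (ξ : ℝ) : Matrix (Fin 3) (Fin 3) ℂ :=
  let d : ℂ := 1 + (ξ : ℂ) ^ 2
  let e : ℂ := 1 + (ξ : ℂ) ^ 2 + (ξ : ℂ) ^ 4
  !![1, -Complex.I * ξ / d, -((ξ : ℂ) ^ 2 + Complex.I * ξ) / d ^ 2;
     0, 1, -((ξ : ℂ) ^ 2 + Complex.I * ξ * e) / (e * d);
     0, 0, 1]

def pivots (ξ : ℝ) : Fin 3 → ℝ :=
  let d : ℝ := 1 + ξ ^ 2
  let e : ℝ := 1 + ξ ^ 2 + ξ ^ 4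
  ![1, e / d ^ 2, (e ^ 2 - ξ ^ 2) / (e * d ^ 2)]

theorem unitFactor_isUpperTriangular (ξ : ℝ) : (unitFactor ξ).IsUpperTriangular := by
  intro i j hij
  fin_cases i <;> fin_cases j <;> simp_all [unitFactor]

theorem unitFactor_diag (ξ : ℝ) (i : Fin 3) : unitFactor ξ i i = 1 := by
  fin_cases i <;> simp [unitFactor]

theorem pivots_pos (ξ : ℝ) (i : Fin 3) : 0 < pivots ξ i := by
  have hd : 0 < 1 + ξ ^ 2 := by positivity
  have he : 0 < 1 + ξ ^ 2 + ξ ^ 4 := by positivity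
  have hξe : ξ ^ 2 < (1 + ξ ^ 2 + ξ ^ 4) ^ 2 := by
    nlinarith [sq_nonneg (ξ - 1 / 2), sq_nonneg (ξ + 1 / 2), sq_nonneg (ξ ^ 2)]
  fin_cases i <;> simp [pivots] <;> positivity

theorem theta_eq_conjTranspose_mul_diagonal_mul (ξ : ℝ) :
    theta ξ = (unitFactor ξ)ᴴ * diagonal (fun i ↦ (pivots ξ i : ℂ)) * unitFactor ξ := by
  have hd : 1 + (ξ : ℂ) ^ 2 ≠ 0 := by exact_mod_cast (by positivity : (1 + ξ ^ 2 : ℝ) ≠ 0)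
  have he : 1 + (ξ : ℂ) ^ 2 + (ξ : ℂ) ^ 4 ≠ 0 := by
    exact_mod_cast (by positivity : (1 + ξ ^ 2 + ξ ^ 4 : ℝ) ≠ 0)
  ext i j
  fin_cases i <;> fin_cases j <;>
    simp [theta, unitFactor, pivots, mul_apply, Fin.sum_univ_three, map_div₀] <;>
    field_simp <;> ring_nf <;> simp only [Complex.I_sq] <;> ring

theorem theta_posDef (ξ : ℝ) : (theta ξ).PosDef := by
  rw [theta_eq_conjTranspose_mul_diagonal_mul]
  exact .conjTranspose_mul_diagonal_mul_of_isUpperTriangular (unitFactor_isUpperTriangular ξ)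
    (unitFactor_diag ξ) fun i ↦ Complex.zero_lt_real.mpr (pivots_pos ξ i)

end

end Theta

/-- The optimal `N = 3` metric `Θ(0)` (i.e. `u = 0`, `s = r = 1`) is Hermitian and positive
definite for every real `ξ`. -/
theorem stmt18 (ξ : ℝ) :
    let Θ : Matrix (Fin 3) (Fin 3) ℂ :=
      !![1, -Complex.I * ξ / (1 + (ξ : ℂ) ^ 2),
           (-(ξ : ℂ) ^ 2 - Complex.I * ξ) / (1 + (ξ : ℂ) ^ 2) ^ 2;
         Complex.I * ξ / (1 + (ξ : ℂ) ^ 2), 1, -Complex.I * ξ / (1 + (ξ : ℂ) ^ 2);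
         (-(ξ : ℂ) ^ 2 + Complex.I * ξ) / (1 + (ξ : ℂ) ^ 2) ^ 2,
           Complex.I * ξ / (1 + (ξ : ℂ) ^ 2), 1]
    Θ.IsHermitian ∧ Θ.PosDef :=
  ⟨(Theta.theta_posDef ξ).isHermitian, Theta.theta_posDef ξ⟩
end
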